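/- arXiv:1903.10803 — 8 statements merged into one kernel-verified Lean document; each statement's English description precedes it below -/
import Mathlib

section
/- Let T > 0 and let F : [0,T] × ℝⁿ → Set ℝⁿ be such that F(t,·) is monotone for each t ∈ [0,T]. If x₁, x₂ : [0,T] → ℝⁿ are absolutely continuous, satisfy ẋᵢ(t) ∈ −F(t, xᵢ(t)) for almost every t ∈ [0,T] (i = 1, 2), and x₁(0) = x₂(0), then x₁(t) = x₂(t) for all t ∈ [0,T]. -/
open MeasureTheory Set Filter
open scoped RealInnerProductSpace

noncomputable section

abbrev Vec (n : ℕ) := EuclideanSpace ℝ (Fin n)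

def IsMonotoneSV {n : ℕ} (G : Vec n → Set (Vec n)) : Prop :=
  ∀ x₁ x₂ y₁ y₂ : Vec n, y₁ ∈ G x₁ → y₂ ∈ G x₂ → 0 ≤ ⟪x₁ - x₂, y₁ - y₂⟫

lemma key_identity {n : ℕ} (t : ℝ) (ht : 0 ≤ t) (h : ℝ → Vec n)
    (hint : IntegrableOn h (Icc 0 t)) :
    ‖∫ s in Ioc (0:ℝ) t, h s‖^2
      = 2 * ∫ s in Ioc (0:ℝ) t, ⟪(∫ u in Ioc (0:ℝ) s, h u), h s⟫ := by
  set μ : Measure ℝ := volume.restrict (Ioc 0 t) with hμ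
  set Y : ℝ → Vec n := fun s => ∫ u in Ioc (0:ℝ) s, h u with hY
  have hintIoc : IntegrableOn h (Ioc 0 t) := hint.mono_set Ioc_subset_Icc_self
  have hintμ : Integrable h μ := hintIoc
  -- Y is bounded and measurable on Ioc 0 t
  have hYcont : ContinuousOn Y (Icc 0 t) := intervalIntegral.continuousOn_primitive hint
  have hYmeas : AEStronglyMeasurable Y μ :=
    (hYcont.mono Ioc_subset_Icc_self).aestronglyMeasurable measurableSet_Ioc
  have hnorm : IntegrableOn (fun s => ‖h s‖) (Ioc 0 t) := hintIoc.norm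
  set C : ℝ := ∫ s in Ioc (0:ℝ) t, ‖h s‖ with hC
  have hYbound : ∀ s ∈ Ioc (0:ℝ) t, ‖Y s‖ ≤ C := by
    intro s hs
    calc ‖Y s‖ ≤ ∫ u in Ioc (0:ℝ) s, ‖h u‖ := norm_integral_le_integral_norm _
    _ ≤ C := by
        apply setIntegral_mono_set hnorm
        · exact Filter.Eventually.of_forall fun u => norm_nonneg _
        · exact HasSubset.Subset.eventuallyLE (Ioc_subset_Ioc le_rfl hs.2)
  -- integrability of fun s => ⟪h s, Y s⟫
  have hA : Integrable (fun s => ⟪h s, Y s⟫) μ := by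
    refine Integrable.mono' (hintμ.norm.mul_const C) (hintμ.1.inner hYmeas) ?_
    filter_upwards [ae_restrict_mem measurableSet_Ioc] with s hs
    calc ‖⟪h s, Y s⟫‖ ≤ ‖h s‖ * ‖Y s‖ := norm_inner_le_norm _ _
    _ ≤ ‖h s‖ * C := by
        exact mul_le_mul_of_nonneg_left (hYbound s hs) (norm_nonneg _)
  -- decompose Y t
  have hsplit : ∀ s ∈ Ioc (0:ℝ) t, Y t = Y s + ∫ u in Ioc s t, h u := by
    intro s hs
    show (∫ u in Ioc (0:ℝ) t, h u) = (∫ u in Ioc (0:ℝ) s, h u) + ∫ u in Ioc s t, h u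
    rw [← Ioc_union_Ioc_eq_Ioc hs.1.le hs.2,
      setIntegral_union (Ioc_disjoint_Ioc_of_le le_rfl) measurableSet_Ioc
        (hintIoc.mono_set (Ioc_subset_Ioc le_rfl hs.2)) (hintIoc.mono_set (Ioc_subset_Ioc hs.1.le le_rfl))]
  -- the double-integral kernel
  set Φ : ℝ → ℝ → ℝ := fun s u => ({p : ℝ × ℝ | p.1 < p.2}.indicator
      (fun p => ⟪h p.1, h p.2⟫)) (s, u) with hΦ
  have hΦint : Integrable (Function.uncurry Φ) (μ.prod μ) := by
    refine Integrable.mono' ((hintμ.norm).mul_prod (hintμ.norm)) ?_ ?_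
    · apply AEStronglyMeasurable.indicator
      · exact (hintμ.1.comp_fst).inner (hintμ.1.comp_snd)
      · exact measurableSet_lt measurable_fst measurable_snd
    · refine Filter.Eventually.of_forall fun p => ?_
      have hval : Function.uncurry Φ p = if p.1 < p.2 then ⟪h p.1, h p.2⟫ else 0 := by
        simp [hΦ, Function.uncurry, Set.indicator_apply]
      rw [hval]
      split_ifs with hp
      · exact norm_inner_le_norm _ _
      · rw [norm_zero]; positivity
  -- evaluate inner integrals of Φ
  have hΦeval₁ : ∀ s ∈ Ioc (0:ℝ) t, ∫ u, Φ s u ∂μ = ⟪h s, Y t⟫ - ⟪h s, Y s⟫ := by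
    intro s hs
    have : ∫ u, Φ s u ∂μ = ∫ u in Ioc (0:ℝ) t ∩ Ioi s, ⟪h s, h u⟫ := by
      rw [hμ]
      have : ∀ u, Φ s u = (Ioi s).indicator (fun u => ⟪h s, h u⟫) u := by
        intro u
        simp only [hΦ, indicator]
        rfl
      simp_rw [this]
      exact setIntegral_indicator measurableSet_Ioi
    rw [this]
    have hset : Ioc (0:ℝ) t ∩ Ioi s = Ioc s t := by
      ext u; simp only [mem_inter_iff, mem_Ioc, mem_Ioi]
      constructor
      · rintro ⟨⟨_, hu2⟩, hu3⟩; exact ⟨hu3, hu2⟩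
      · rintro ⟨hu1, hu2⟩; exact ⟨⟨hs.1.trans hu1, hu2⟩, hu1⟩
    rw [hset, integral_inner (hintIoc.mono_set (Ioc_subset_Ioc hs.1.le le_rfl))]
    have := hsplit s hs
    rw [show (∫ u in Ioc s t, h u) = Y t - Y s by rw [this]; abel]
    rw [inner_sub_right]
  have hΦeval₂ : ∀ u ∈ Ioc (0:ℝ) t, ∫ s, Φ s u ∂μ = ⟪Y u, h u⟫ := by
    intro u hu
    have : ∫ s, Φ s u ∂μ = ∫ s in Ioc (0:ℝ) t ∩ Iio u, ⟪h s, h u⟫ := by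
      rw [hμ]
      have : ∀ s, Φ s u = (Iio u).indicator (fun s => ⟪h s, h u⟫) s := by
        intro s
        simp only [hΦ, indicator]
        rfl
      simp_rw [this]
      exact setIntegral_indicator measurableSet_Iio
    rw [this]
    have hset : Ioc (0:ℝ) t ∩ Iio u = Ioo 0 u := by
      ext s; simp only [mem_inter_iff, mem_Ioc, mem_Iio, mem_Ioo]
      constructor
      · rintro ⟨⟨h1, _⟩, h3⟩; exact ⟨h1, h3⟩
      · rintro ⟨h1, h2⟩; exact ⟨⟨h1, h2.le.trans hu.2⟩, h2⟩
    rw [hset, ← integral_Ioc_eq_integral_Ioo]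
    simp_rw [real_inner_comm]
    exact integral_inner (hintIoc.mono_set (Ioc_subset_Ioc le_rfl hu.2)) (h u)
  -- main computation
  have hmain : ⟪Y t, Y t⟫ = ∫ s, ⟪h s, Y s⟫ ∂μ + ∫ s, (∫ u, Φ s u ∂μ) ∂μ := by
    have e1 : ⟪Y t, Y t⟫ = ∫ s, ⟪h s, Y t⟫ ∂μ := by
      have : ∀ s, ⟪h s, Y t⟫ = ⟪Y t, h s⟫ := fun s => real_inner_comm _ _
      simp_rw [this]
      rw [integral_inner hintμ (Y t)]
    rw [e1]
    have e2 : ∫ s, ⟪h s, Y t⟫ ∂μ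
        = ∫ s, (⟪h s, Y s⟫ + (⟪h s, Y t⟫ - ⟪h s, Y s⟫)) ∂μ := by
      congr 1; ext s; ring
    rw [e2]
    have hB : Integrable (fun s => ⟪h s, Y t⟫ - ⟪h s, Y s⟫) μ := by
      refine Integrable.sub ?_ hA
      refine Integrable.mono' (hintμ.norm.mul_const ‖Y t‖) (hintμ.1.inner aestronglyMeasurable_const) ?_
      exact Filter.Eventually.of_forall fun s => norm_inner_le_norm _ _
    rw [integral_add hA hB]
    congr 1
    apply integral_congr_ae
    filter_upwards [ae_restrict_mem measurableSet_Ioc] with s hs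
    exact ((hΦeval₁ s hs)).symm
  have hswap : ∫ s, (∫ u, Φ s u ∂μ) ∂μ = ∫ u, (∫ s, Φ s u ∂μ) ∂μ :=
    integral_integral_swap hΦint
  have hmain2 : ⟪Y t, Y t⟫ = 2 * ∫ s, ⟪Y s, h s⟫ ∂μ := by
    rw [hmain, hswap]
    have : ∫ u, (∫ s, Φ s u ∂μ) ∂μ = ∫ u, ⟪Y u, h u⟫ ∂μ := by
      apply integral_congr_ae
      filter_upwards [ae_restrict_mem measurableSet_Ioc] with u hu
      exact hΦeval₂ u hu
    rw [this]
    have : ∫ s, ⟪h s, Y s⟫ ∂μ = ∫ s, ⟪Y s, h s⟫ ∂μ := by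
      congr 1; ext s; rw [real_inner_comm]
    rw [this]; ring
  rw [← real_inner_self_eq_norm_sq]
  exact hmain2

theorem stmt1 {n : ℕ} (T : ℝ) (hT : 0 < T) (F : ℝ → Vec n → Set (Vec n))
    (hmono : ∀ t ∈ Icc (0:ℝ) T, IsMonotoneSV (F t))
    (x₁ x₂ g₁ g₂ : ℝ → Vec n)
    -- `x₁`, `x₂` are absolutely continuous with a.e. derivatives `g₁`, `g₂`
    (hg₁ : IntegrableOn g₁ (Icc 0 T)) (hg₂ : IntegrableOn g₂ (Icc 0 T))
    (hx₁ : ∀ t ∈ Icc (0:ℝ) T, x₁ t = x₁ 0 + ∫ s in (0:ℝ)..t, g₁ s)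
    (hx₂ : ∀ t ∈ Icc (0:ℝ) T, x₂ t = x₂ 0 + ∫ s in (0:ℝ)..t, g₂ s)
    -- `ẋᵢ(t) ∈ -F(t, xᵢ(t))` for almost every `t ∈ [0,T]`
    (hincl₁ : ∀ᵐ t ∂(volume.restrict (Icc (0:ℝ) T)), -(g₁ t) ∈ F t (x₁ t))
    (hincl₂ : ∀ᵐ t ∂(volume.restrict (Icc (0:ℝ) T)), -(g₂ t) ∈ F t (x₂ t))
    (h0 : x₁ 0 = x₂ 0) :
    ∀ t ∈ Icc (0:ℝ) T, x₁ t = x₂ t := by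
  intro t ht
  set h : ℝ → Vec n := fun s => g₁ s - g₂ s with hh
  have hhT : IntegrableOn h (Icc 0 T) := hg₁.sub hg₂
  have hht : IntegrableOn h (Icc 0 t) := hhT.mono_set (Icc_subset_Icc le_rfl ht.2)
  have hdiff : ∀ s ∈ Icc (0:ℝ) T, x₁ s - x₂ s = ∫ u in Ioc (0:ℝ) s, h u := by
    intro s hs
    have hsub : Icc (0:ℝ) s ⊆ Icc 0 T := Icc_subset_Icc le_rfl hs.2
    have hi₁ : IntervalIntegrable g₁ volume 0 s :=
      (intervalIntegrable_iff_integrableOn_Ioc_of_le hs.1).2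
        ((hg₁.mono_set hsub).mono_set Ioc_subset_Icc_self)
    have hi₂ : IntervalIntegrable g₂ volume 0 s :=
      (intervalIntegrable_iff_integrableOn_Ioc_of_le hs.1).2
        ((hg₂.mono_set hsub).mono_set Ioc_subset_Icc_self)
    rw [hx₁ s hs, hx₂ s hs, h0]
    have e : x₂ 0 + (∫ u in (0:ℝ)..s, g₁ u) - (x₂ 0 + ∫ u in (0:ℝ)..s, g₂ u)
        = (∫ u in (0:ℝ)..s, g₁ u) - ∫ u in (0:ℝ)..s, g₂ u := by abel
    rw [e, ← intervalIntegral.integral_sub hi₁ hi₂, intervalIntegral.integral_of_le hs.1]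
  have hae : ∀ᵐ s ∂(volume.restrict (Icc (0:ℝ) T)), ⟪x₁ s - x₂ s, h s⟫ ≤ 0 := by
    filter_upwards [hincl₁, hincl₂, ae_restrict_mem measurableSet_Icc] with s h1 h2 hs
    have hm := hmono s hs (x₁ s) (x₂ s) (-(g₁ s)) (-(g₂ s)) h1 h2
    have e : -(g₁ s) - -(g₂ s) = -(h s) := by simp [hh]; abel
    rw [e, inner_neg_right] at hm
    linarith
  have hIneg : (∫ s in Ioc (0:ℝ) t, ⟪(∫ u in Ioc (0:ℝ) s, h u), h s⟫) ≤ 0 := by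
    apply integral_nonpos_of_ae
    have hsub : Ioc (0:ℝ) t ⊆ Icc 0 T :=
      Ioc_subset_Icc_self.trans (Icc_subset_Icc le_rfl ht.2)
    filter_upwards [ae_restrict_of_ae_restrict_of_subset hsub hae,
      ae_restrict_mem measurableSet_Ioc] with s h1 hs
    have hsT : s ∈ Icc (0:ℝ) T := ⟨hs.1.le, hs.2.trans ht.2⟩
    rw [← hdiff s hsT]
    exact h1
  have hkey := key_identity t ht.1 h hht
  have hte : x₁ t - x₂ t = ∫ u in Ioc (0:ℝ) t, h u := hdiff t ht
  have hsq : ‖x₁ t - x₂ t‖^2 ≤ 0 := by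
    rw [hte, hkey]; linarith
  have : ‖x₁ t - x₂ t‖ = 0 := by nlinarith [norm_nonneg (x₁ t - x₂ t), sq_nonneg ‖x₁ t - x₂ t‖]
  have := norm_eq_zero.mp this
  exact sub_eq_zero.mp this
end
end

section
/- Let T > 0, let ψ : [0,T] → ℝ be a nondecreasing absolutely continuous function, and let μ be the measure on [0,T] with density ψ′ with respect to Lebesgue measure. Suppose (y_ℓ) is a sequence in L²(μ; ℝⁿ) converging weakly to y in L²(μ; ℝⁿ), and (x_ℓ) is a sequence of absolutely continuous functions [0,T] → ℝⁿ converging uniformly on [0,T] to an absolutely continuous function x, such that for each ℓ, ẋ_ℓ(t) = ψ′(t) · y_ℓ(t) for almost every t ∈ [0,T]. Then x(t) = x(0) + ∫₀ᵗ y(s) ψ′(s) ds for all t ∈ [0,T]; in particular ẋ(t) = ψ′(t) · y(t) for almost every t ∈ [0,T]. -/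
open MeasureTheory Set Filter
open scoped RealInnerProductSpace ENNReal NNReal

noncomputable section

theorem stmt3 {n : ℕ} (T : ℝ) (hT : 0 < T)
    -- `ψ` is a nondecreasing absolutely continuous function with a.e. derivative `dψ ≥ 0`
    (ψ dψ : ℝ → ℝ)
    (hψmono : MonotoneOn ψ (Icc 0 T))
    (hdψint : IntegrableOn dψ (Icc 0 T))
    (hdψnn : ∀ᵐ s ∂(volume.restrict (Icc (0:ℝ) T)), 0 ≤ dψ s)
    (hψAC : ∀ t ∈ Icc (0:ℝ) T, ψ t = ψ 0 + ∫ s in (0:ℝ)..t, dψ s)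
    -- `μ` is the measure with density `ψ'` w.r.t. Lebesgue measure on `[0,T]`
    (μ : Measure ℝ)
    (hμ : μ = (volume.restrict (Icc (0:ℝ) T)).withDensity (fun s => ENNReal.ofReal (dψ s)))
    -- `(y ℓ)` converges weakly to `ylim` in `L²(μ; ℝⁿ)`
    (y : ℕ → ℝ → Vec n) (ylim : ℝ → Vec n)
    (hyL2 : ∀ ℓ, MemLp (y ℓ) 2 μ) (hylimL2 : MemLp ylim 2 μ)
    (hweak : ∀ g : ℝ → Vec n, MemLp g 2 μ →
      Tendsto (fun ℓ => ∫ s, ⟪y ℓ s, g s⟫ ∂μ) atTop (nhds (∫ s, ⟪ylim s, g s⟫ ∂μ)))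
    -- `(x ℓ)` are absolutely continuous with `ẋ_ℓ = ψ' ⬝ y_ℓ` a.e.
    (x : ℕ → ℝ → Vec n) (xlim : ℝ → Vec n)
    (hxint : ∀ ℓ, IntegrableOn (fun s => dψ s • y ℓ s) (Icc 0 T))
    (hxAC : ∀ ℓ, ∀ t ∈ Icc (0:ℝ) T, x ℓ t = x ℓ 0 + ∫ s in (0:ℝ)..t, dψ s • y ℓ s)
    -- `(x ℓ)` converges uniformly on `[0,T]` to the absolutely continuous function `xlim`
    (hunif : TendstoUniformlyOn (fun ℓ => x ℓ) xlim atTop (Icc 0 T))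
    (gx : ℝ → Vec n) (hgxint : IntegrableOn gx (Icc 0 T))
    (hxlimAC : ∀ t ∈ Icc (0:ℝ) T, xlim t = xlim 0 + ∫ s in (0:ℝ)..t, gx s) :
    (∀ t ∈ Icc (0:ℝ) T, xlim t = xlim 0 + ∫ s in (0:ℝ)..t, dψ s • ylim s) ∧
    (∀ᵐ t ∂(volume.restrict (Icc (0:ℝ) T)), gx t = dψ t • ylim t) := by
  subst hμ
  have hofr : (fun s : ℝ => ENNReal.ofReal (dψ s))
      = (fun s : ℝ => ((Real.toNNReal (dψ s) : ℝ≥0) : ℝ≥0∞)) := rfl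
  have hdψaem : AEMeasurable (fun s => Real.toNNReal (dψ s))
      (volume.restrict (Icc (0:ℝ) T)) :=
    measurable_real_toNNReal.comp_aemeasurable hdψint.aemeasurable
  -- finiteness of μ
  haveI hμfin : IsFiniteMeasure
      ((volume.restrict (Icc (0:ℝ) T)).withDensity (fun s => ENNReal.ofReal (dψ s))) := by
    refine ⟨?_⟩
    rw [withDensity_apply _ MeasurableSet.univ, Measure.restrict_univ]
    calc ∫⁻ s, ENNReal.ofReal (dψ s) ∂(volume.restrict (Icc (0:ℝ) T))
        ≤ ∫⁻ s, (‖dψ s‖₊ : ℝ≥0∞) ∂(volume.restrict (Icc (0:ℝ) T)) :=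
          lintegral_mono fun s => Real.ofReal_le_enorm _
      _ < ⊤ := hdψint.2
  -- the key computation
  have key : ∀ (f : ℝ → Vec n), IntegrableOn (fun s => dψ s • f s) (Icc 0 T) →
      ∀ t ∈ Icc (0:ℝ) T, ∀ v : Vec n,
      ∫ s, ⟪f s, (Icc (0:ℝ) t).indicator (fun _ => v) s⟫
          ∂((volume.restrict (Icc (0:ℝ) T)).withDensity (fun s => ENNReal.ofReal (dψ s)))
        = ⟪∫ s in (0:ℝ)..t, dψ s • f s, v⟫ := by
    intro f hfint t ht v
    have hsub : Icc (0:ℝ) t ⊆ Icc 0 T := Icc_subset_Icc le_rfl ht.2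
    have hnn : ∀ᵐ s ∂(volume.restrict (Icc (0:ℝ) t)), 0 ≤ dψ s :=
      ae_restrict_of_ae_restrict_of_subset hsub hdψnn
    have hres : ((volume.restrict (Icc (0:ℝ) T)).withDensity
          (fun s => ENNReal.ofReal (dψ s))).restrict (Icc (0:ℝ) t)
        = (volume.restrict (Icc (0:ℝ) t)).withDensity (fun s => ENNReal.ofReal (dψ s)) := by
      rw [restrict_withDensity measurableSet_Icc, Measure.restrict_restrict measurableSet_Icc,
        Set.inter_eq_self_of_subset_left hsub]
    calc ∫ s, ⟪f s, (Icc (0:ℝ) t).indicator (fun _ => v) s⟫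
            ∂((volume.restrict (Icc (0:ℝ) T)).withDensity (fun s => ENNReal.ofReal (dψ s)))
        = ∫ s, (Icc (0:ℝ) t).indicator (fun s => ⟪f s, v⟫) s
            ∂((volume.restrict (Icc (0:ℝ) T)).withDensity (fun s => ENNReal.ofReal (dψ s))) := by
          refine integral_congr_ae (Eventually.of_forall fun s => ?_)
          by_cases hs : s ∈ Icc (0:ℝ) t <;> simp [hs]
      _ = ∫ s in Icc (0:ℝ) t, ⟪f s, v⟫
            ∂((volume.restrict (Icc (0:ℝ) T)).withDensity (fun s => ENNReal.ofReal (dψ s))) :=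
          integral_indicator measurableSet_Icc
      _ = ∫ s, ⟪f s, v⟫
            ∂((volume.restrict (Icc (0:ℝ) t)).withDensity (fun s => ENNReal.ofReal (dψ s))) := by
          rw [hres]
      _ = ∫ s in Icc (0:ℝ) t, Real.toNNReal (dψ s) • ⟪f s, v⟫ := by
          rw [hofr, integral_withDensity_eq_integral_smul₀
            (hdψaem.mono_measure (Measure.restrict_mono hsub le_rfl))]
      _ = ∫ s in Icc (0:ℝ) t, ⟪dψ s • f s, v⟫ := by
          refine integral_congr_ae ?_
          filter_upwards [hnn] with s hs
          rw [NNReal.smul_def, Real.coe_toNNReal _ hs, real_inner_smul_left, smul_eq_mul]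
      _ = ∫ s in Icc (0:ℝ) t, ⟪v, dψ s • f s⟫ :=
          integral_congr_ae (Eventually.of_forall fun s => real_inner_comm _ _)
      _ = ⟪v, ∫ s in Icc (0:ℝ) t, dψ s • f s⟫ := integral_inner (hfint.mono_set hsub) v
      _ = ⟪∫ s in Icc (0:ℝ) t, dψ s • f s, v⟫ := real_inner_comm _ _
      _ = ⟪∫ s in (0:ℝ)..t, dψ s • f s, v⟫ := by
          rw [intervalIntegral.integral_of_le ht.1, integral_Icc_eq_integral_Ioc]
  -- integrability of `dψ • ylim`
  have hylimint : IntegrableOn (fun s => dψ s • ylim s) (Icc 0 T) := by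
    have h1 : Integrable ylim
        ((volume.restrict (Icc (0:ℝ) T)).withDensity (fun s => ENNReal.ofReal (dψ s))) :=
      hylimL2.integrable (by norm_num)
    rw [hofr] at h1
    have h2 := (integrable_withDensity_iff_integrable_smul₀ hdψaem).mp h1
    refine h2.congr ?_
    filter_upwards [hdψnn] with s hs
    rw [NNReal.smul_def, Real.coe_toNNReal _ hs]
  -- main identity
  have main : ∀ t ∈ Icc (0:ℝ) T, xlim t - xlim 0 = ∫ s in (0:ℝ)..t, dψ s • ylim s := by
    intro t ht
    have h0 : (0:ℝ) ∈ Icc (0:ℝ) T := ⟨le_rfl, hT.le⟩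
    refine ext_inner_right ℝ fun v => ?_
    have hgmem : MemLp ((Icc (0:ℝ) t).indicator fun _ => v) 2
        ((volume.restrict (Icc (0:ℝ) T)).withDensity (fun s => ENNReal.ofReal (dψ s))) :=
      MemLp.indicator measurableSet_Icc (memLp_const v)
    have h1 := hweak _ hgmem
    have h2 : ∀ ℓ, (∫ s, ⟪y ℓ s, ((Icc (0:ℝ) t).indicator fun _ => v) s⟫
        ∂((volume.restrict (Icc (0:ℝ) T)).withDensity (fun s => ENNReal.ofReal (dψ s))))
        = ⟪x ℓ t - x ℓ 0, v⟫ := by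
      intro ℓ
      rw [key (y ℓ) (hxint ℓ) t ht v, hxAC ℓ t ht, add_sub_cancel_left]
    have h3 : Tendsto (fun ℓ => ⟪x ℓ t - x ℓ 0, v⟫) atTop
        (nhds ⟪∫ s in (0:ℝ)..t, dψ s • ylim s, v⟫) := by
      rw [← key ylim hylimint t ht v]
      simpa only [h2] using h1
    have h4 : Tendsto (fun ℓ => ⟪x ℓ t - x ℓ 0, v⟫) atTop (nhds ⟪xlim t - xlim 0, v⟫) :=
      Tendsto.inner ((hunif.tendsto_at ht).sub (hunif.tendsto_at h0)) tendsto_const_nhds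
    exact tendsto_nhds_unique h4 h3
  have part1 : ∀ t ∈ Icc (0:ℝ) T, xlim t = xlim 0 + ∫ s in (0:ℝ)..t, dψ s • ylim s := by
    intro t ht
    rw [← main t ht]
    abel
  refine ⟨part1, ?_⟩
  -- Part 2 : a.e. equality via the Lebesgue differentiation theorem
  have hintdiff : IntegrableOn (fun s => gx s - dψ s • ylim s) (Icc 0 T) := hgxint.sub hylimint
  have hii : ∀ a ∈ Icc (0:ℝ) T, ∀ b ∈ Icc (0:ℝ) T,
      IntervalIntegrable (fun s => gx s - dψ s • ylim s) volume a b := fun a ha b hb =>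
    (intervalIntegrable_iff' (h := enorm_ne_top)).mpr (hintdiff.mono_set (uIcc_subset_Icc ha hb))
  have hF : ∀ t ∈ Icc (0:ℝ) T, (∫ s in (0:ℝ)..t, (gx s - dψ s • ylim s)) = 0 := by
    intro t ht
    have h0 : (0:ℝ) ∈ Icc (0:ℝ) T := ⟨le_rfl, hT.le⟩
    have hi1 : IntervalIntegrable gx volume 0 t :=
      (intervalIntegrable_iff' (h := enorm_ne_top)).mpr (hgxint.mono_set (uIcc_subset_Icc h0 ht))
    have hi2 : IntervalIntegrable (fun s => dψ s • ylim s) volume 0 t :=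
      (intervalIntegrable_iff' (h := enorm_ne_top)).mpr (hylimint.mono_set (uIcc_subset_Icc h0 ht))
    rw [intervalIntegral.integral_sub hi1 hi2]
    have e1 : (∫ s in (0:ℝ)..t, gx s) = xlim t - xlim 0 := by rw [hxlimAC t ht]; abel
    have e2 : (∫ s in (0:ℝ)..t, dψ s • ylim s) = xlim t - xlim 0 := (main t ht).symm
    rw [e1, e2, sub_self]
  set h' : ℝ → Vec n := (Icc (0:ℝ) T).indicator (fun s => gx s - dψ s • ylim s) with hh'
  have hloc : LocallyIntegrable h' volume :=
    (hintdiff.integrable_indicator measurableSet_Icc).locallyIntegrable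
  have hball : ∀ x ∈ Ioo (0:ℝ) T, ∀ r : ℝ, 0 < r → r ≤ min x (T - x) →
      (∫ s in Metric.closedBall x r, h' s) = 0 := by
    intro x hx r hr hrle
    have hxr0 : 0 ≤ x - r := by
      have := le_trans hrle (min_le_left _ _); linarith
    have hxrT : x + r ≤ T := by
      have := le_trans hrle (min_le_right _ _); linarith
    have hmem1 : x - r ∈ Icc (0:ℝ) T := ⟨hxr0, by linarith⟩
    have hmem2 : x + r ∈ Icc (0:ℝ) T := ⟨by linarith, hxrT⟩
    have hsub : Icc (x - r) (x + r) ⊆ Icc (0:ℝ) T := Icc_subset_Icc hxr0 hxrT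
    rw [Real.closedBall_eq_Icc, hh', setIntegral_indicator measurableSet_Icc,
      Set.inter_eq_self_of_subset_left hsub]
    have e3 : (∫ s in Icc (x - r) (x + r), (gx s - dψ s • ylim s))
        = ∫ s in (x - r)..(x + r), (gx s - dψ s • ylim s) := by
      rw [intervalIntegral.integral_of_le (by linarith), integral_Icc_eq_integral_Ioc]
    rw [e3, ← intervalIntegral.integral_interval_sub_left
      (hii 0 ⟨le_rfl, hT.le⟩ (x + r) hmem2) (hii 0 ⟨le_rfl, hT.le⟩ (x - r) hmem1),
      hF _ hmem2, hF _ hmem1, sub_self]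
  have hae : ∀ᵐ t ∂(volume : Measure ℝ), t ∈ Ioo (0:ℝ) T → gx t - dψ t • ylim t = 0 := by
    filter_upwards [IsUnifLocDoublingMeasure.ae_tendsto_average
      (μ := (volume : Measure ℝ)) hloc 1] with t htend ht
    set ε := min t (T - t) with hε
    have hε0 : 0 < ε := lt_min ht.1 (sub_pos.mpr ht.2)
    have hδ0 : ∀ j : ℕ, 0 < ε / (j + 1) := fun j => by positivity
    have hδ : Tendsto (fun j : ℕ => ε / (j + 1)) atTop (nhdsWithin 0 (Set.Ioi 0)) := by
      refine tendsto_nhdsWithin_of_tendsto_nhds_of_eventually_within _ ?_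
        (Eventually.of_forall fun j => hδ0 j)
      exact Tendsto.div_atTop tendsto_const_nhds
        (tendsto_atTop_add_const_right _ 1 tendsto_natCast_atTop_atTop)
    have hmem : ∀ᶠ j : ℕ in atTop, t ∈ Metric.closedBall t (1 * (ε / (j + 1))) :=
      Eventually.of_forall fun j => by
        simp [Metric.mem_closedBall, (hδ0 j).le]
    have htt := htend (fun _ => t) (fun j : ℕ => ε / (j + 1)) hδ hmem
    have hz : ∀ j : ℕ, (⨍ s in Metric.closedBall t (ε / (j + 1)), h' s) = 0 := by
      intro j
      rw [setAverage_eq, hball t ht _ (hδ0 j)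
        (div_le_self hε0.le (le_add_of_nonneg_left (Nat.cast_nonneg j))), smul_zero]
    have h0 : h' t = 0 := by
      have : Tendsto (fun _ : ℕ => (0 : Vec n)) atTop (nhds (h' t)) := by
        simpa only [hz] using htt
      exact (tendsto_nhds_unique tendsto_const_nhds this).symm
    have e4 : h' t = gx t - dψ t • ylim t :=
      Set.indicator_of_mem (Ioo_subset_Icc_self ht) _
    rw [← e4, h0]
  have hIoo : ∀ᵐ t ∂(volume.restrict (Icc (0:ℝ) T)), t ∈ Ioo (0:ℝ) T := by
    filter_upwards [ae_restrict_of_ae (Filter.eventuallyEq_set.mp Ioo_ae_eq_Icc),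
      ae_restrict_mem measurableSet_Icc] with t h1 h2
    exact h1.mpr h2
  filter_upwards [ae_restrict_of_ae hae, hIoo] with t h1 h2
  exact sub_eq_zero.mp (h1 h2)
end
end

section
/- Let T > 0 and let μ be a measure on [0,T] that is mutually absolutely continuous with respect to Lebesgue measure on [0,T]. Let (f_ℓ) be a sequence of functions f_ℓ : [0,T] → ℝ with |f_ℓ(t)| ≤ 1 for all ℓ ∈ ℕ and all t ∈ [0,T], and suppose (f_ℓ) converges weakly in L²(μ; ℝ) to f. Then for almost every t ∈ [0,T] (with respect to Lebesgue measure), liminf_{ℓ→∞} f_ℓ(t) ≤ f(t) ≤ limsup_{ℓ→∞} f_ℓ(t). -/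
open MeasureTheory Set Filter
open scoped ENNReal

noncomputable section

/-- For real sequences, `limsup (-u) = - liminf u`. -/
lemma limsup_neg_real (u : ℕ → ℝ) :
    limsup (fun n => -u n) atTop = - liminf u atTop := by
  rw [limsup_eq, liminf_eq, Real.sInf_def]
  congr 2
  ext a
  simp only [Set.mem_neg, Set.mem_setOf_eq, neg_le_neg_iff]

/-- Auxiliary one-sided result: if measurable `F ℓ` are uniformly bounded a.e. and
converge weakly in `L²(μ)` to `G`, then `G ≤ limsup F` a.e. -/
lemma aux_limsup (μ : Measure ℝ) (F : ℕ → ℝ → ℝ) (G : ℝ → ℝ)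
    (hFm : ∀ ℓ, Measurable (F ℓ)) (hGm : Measurable G)
    (hbd : ∀ᵐ t ∂μ, ∀ ℓ, |F ℓ t| ≤ 1)
    (hF2 : ∀ ℓ, MemLp (F ℓ) 2 μ) (hG2 : MemLp G 2 μ)
    (hweak : ∀ g : ℝ → ℝ, MemLp g 2 μ →
      Tendsto (fun ℓ => ∫ t, F ℓ t * g t ∂μ) atTop (nhds (∫ t, G t * g t ∂μ))) :
    ∀ᵐ t ∂μ, G t ≤ limsup (fun ℓ => F ℓ t) atTop := by
  set A : ℚ → ℚ → ℕ → Set ℝ := fun q' q m =>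
    {t | (q : ℝ) < G t} ∩ ⋂ ℓ, {t | m ≤ ℓ → F ℓ t ≤ (q' : ℝ)} with hA_def
  have hA : ∀ q' q m, MeasurableSet (A q' q m) := by
    intro q' q m
    refine (measurableSet_lt measurable_const hGm).inter (MeasurableSet.iInter fun ℓ => ?_)
    by_cases h : m ≤ ℓ
    · simp only [h, forall_true_left]
      exact measurableSet_le (hFm ℓ) measurable_const
    · simp only [h, false_implies, setOf_true]
      exact MeasurableSet.univ
  have hnull : ∀ q' q : ℚ, (q' : ℝ) < (q : ℝ) → ∀ m, μ (A q' q m) = 0 := by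
    intro q' q hqq m
    set s := A q' q m with hs_def
    have hsm : MeasurableSet s := hA q' q m
    have hmem : ∀ t ∈ s, ((q : ℝ) < G t ∧ ∀ ℓ, m ≤ ℓ → F ℓ t ≤ (q' : ℝ)) := by
      intro t ht
      exact ⟨ht.1, fun ℓ hℓ => Set.mem_iInter.1 ht.2 ℓ hℓ⟩
    -- finiteness of μ s
    have hfin : μ s < ∞ := by
      rcases le_or_gt (q : ℝ) 0 with hq0 | hq0
      · -- q ≤ 0, so q' < 0 and s ⊆ {|F m| large}
        have hq' : (0 : ℝ) < -(q' : ℝ) := by linarith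
        have hsub : s ⊆ {x | ENNReal.ofReal (-(q' : ℝ)) ≤ ‖F m x‖₊} := by
          intro t ht
          have h1 : F m t ≤ (q' : ℝ) := (hmem t ht).2 m le_rfl
          have h2 : -(q' : ℝ) ≤ ‖F m t‖ := by
            rw [Real.norm_eq_abs]
            calc -(q' : ℝ) ≤ -(F m t) := by linarith
            _ ≤ |F m t| := neg_le_abs _
          simpa only [Set.mem_setOf_eq, ofReal_norm, enorm_eq_nnnorm] using
            ENNReal.ofReal_le_ofReal h2
        refine lt_of_le_of_lt (measure_mono hsub) ?_
        exact (hF2 m).meas_ge_lt_top' (by norm_num) (by norm_num)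
          (ENNReal.ofReal_pos.2 hq').ne'
      · -- q > 0, so s ⊆ {|G| large}
        have hsub : s ⊆ {x | ENNReal.ofReal (q : ℝ) ≤ ‖G x‖₊} := by
          intro t ht
          have h1 : (q : ℝ) < G t := (hmem t ht).1
          have h2 : (q : ℝ) ≤ ‖G t‖ := by
            rw [Real.norm_eq_abs]
            exact le_trans h1.le (le_abs_self _)
          simpa only [Set.mem_setOf_eq, ofReal_norm, enorm_eq_nnnorm] using
            ENNReal.ofReal_le_ofReal h2
        refine lt_of_le_of_lt (measure_mono hsub) ?_
        exact hG2.meas_ge_lt_top' (by norm_num) (by norm_num)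
          (ENNReal.ofReal_pos.2 hq0).ne'
    have hμs : μ s ≠ ⊤ := hfin.ne
    haveI : Fact (μ s < ∞) := ⟨hfin⟩
    -- indicator of s is in L²
    set g : ℝ → ℝ := s.indicator (fun _ => (1 : ℝ)) with hg_def
    have hg2 : MemLp g 2 μ := memLp_indicator_const 2 hsm 1 (Or.inr hμs)
    have hrw : ∀ (h : ℝ → ℝ), (fun t => h t * g t) = s.indicator h := by
      intro h
      funext t
      by_cases ht : t ∈ s
      · simp [hg_def, Set.indicator_of_mem ht]
      · simp [hg_def, Set.indicator_of_notMem ht]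
    have h1 : ∀ ℓ, ∫ t, F ℓ t * g t ∂μ = ∫ t in s, F ℓ t ∂μ := by
      intro ℓ
      rw [show (fun t => F ℓ t * g t) = s.indicator (F ℓ) from hrw _, integral_indicator hsm]
    have h2 : ∫ t, G t * g t ∂μ = ∫ t in s, G t ∂μ := by
      rw [show (fun t => G t * g t) = s.indicator G from hrw _, integral_indicator hsm]
    have hFi : ∀ ℓ, IntegrableOn (F ℓ) s μ := fun ℓ => ((hF2 ℓ).restrict s).integrable one_le_two
    have hGi : IntegrableOn G s μ := (hG2.restrict s).integrable one_le_two
    have hub : ∀ ℓ, m ≤ ℓ → ∫ t in s, F ℓ t ∂μ ≤ (q' : ℝ) * (μ s).toReal := by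
      intro ℓ hℓ
      calc ∫ t in s, F ℓ t ∂μ ≤ ∫ _ in s, (q' : ℝ) ∂μ := by
            refine setIntegral_mono_on (hFi ℓ) (integrableOn_const hμs) hsm ?_
            intro t ht
            exact (hmem t ht).2 ℓ hℓ
        _ = (q' : ℝ) * (μ s).toReal := by rw [setIntegral_const, smul_eq_mul, mul_comm, measureReal_def]
    have hlb : (q : ℝ) * (μ s).toReal ≤ ∫ t in s, G t ∂μ := by
      calc (q : ℝ) * (μ s).toReal = ∫ _ in s, (q : ℝ) ∂μ := by
            rw [setIntegral_const, smul_eq_mul, mul_comm, measureReal_def]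
        _ ≤ ∫ t in s, G t ∂μ := by
            refine setIntegral_mono_on (integrableOn_const hμs) hGi hsm ?_
            intro t ht
            exact (hmem t ht).1.le
    have hlim : Tendsto (fun ℓ => ∫ t in s, F ℓ t ∂μ) atTop (nhds (∫ t in s, G t ∂μ)) := by
      have := hweak g hg2
      simpa only [h1, h2] using this
    have hle : ∫ t in s, G t ∂μ ≤ (q' : ℝ) * (μ s).toReal :=
      le_of_tendsto hlim (eventually_atTop.2 ⟨m, hub⟩)
    have hkey : (q : ℝ) * (μ s).toReal ≤ (q' : ℝ) * (μ s).toReal := hlb.trans hle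
    have h0 : (μ s).toReal ≤ 0 := by nlinarith [ENNReal.toReal_nonneg (a := μ s)]
    have h0' : (μ s).toReal = 0 := le_antisymm h0 ENNReal.toReal_nonneg
    exact ((ENNReal.toReal_eq_zero_iff _).1 h0').resolve_right hμs
  -- a.e. avoid all the null sets
  have h1 : ∀ᵐ t ∂μ, ∀ (q' q : ℚ) (m : ℕ), (q' : ℝ) < (q : ℝ) → t ∉ A q' q m := by
    rw [ae_all_iff]
    intro q'
    rw [ae_all_iff]
    intro q
    rw [ae_all_iff]
    intro m
    by_cases h : (q' : ℝ) < (q : ℝ)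
    · filter_upwards [measure_eq_zero_iff_ae_notMem.1 (hnull q' q h m)] with t ht _
      exact ht
    · filter_upwards with t
      exact fun hc => absurd hc h
  filter_upwards [h1, hbd] with t hA1 hb
  by_contra hcon
  push_neg at hcon
  have hbdd : IsBoundedUnder (· ≤ ·) atTop (fun ℓ => F ℓ t) :=
    isBoundedUnder_of ⟨1, fun ℓ => (abs_le.1 (hb ℓ)).2⟩
  obtain ⟨q, hq1, hq2⟩ := exists_rat_btwn hcon
  obtain ⟨q', hq'1, hq'2⟩ := exists_rat_btwn hq1
  have hev : ∀ᶠ ℓ in atTop, F ℓ t < (q' : ℝ) :=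
    eventually_lt_of_limsup_lt hq'1 hbdd
  obtain ⟨m, hm⟩ := eventually_atTop.1 hev
  refine hA1 q' q m hq'2 ?_
  exact ⟨hq2, Set.mem_iInter.2 fun ℓ hℓ => (hm ℓ hℓ).le⟩

theorem stmt4 (T : ℝ) (hT : 0 < T) (μ : Measure ℝ)
    -- `μ` and Lebesgue measure on `[0,T]` are mutually absolutely continuous
    (hμ1 : μ ≪ volume.restrict (Icc (0:ℝ) T))
    (hμ2 : volume.restrict (Icc (0:ℝ) T) ≪ μ)
    (f : ℕ → ℝ → ℝ) (flim : ℝ → ℝ)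
    (hbd : ∀ ℓ, ∀ t ∈ Icc (0:ℝ) T, |f ℓ t| ≤ 1)
    -- `(f ℓ)` converges weakly to `flim` in `L²(μ; ℝ)`
    (hL2 : ∀ ℓ, MemLp (f ℓ) 2 μ) (hlimL2 : MemLp flim 2 μ)
    (hweak : ∀ g : ℝ → ℝ, MemLp g 2 μ →
      Tendsto (fun ℓ => ∫ t, f ℓ t * g t ∂μ) atTop (nhds (∫ t, flim t * g t ∂μ))) :
    ∀ᵐ t ∂(volume.restrict (Icc (0:ℝ) T)),
      liminf (fun ℓ => f ℓ t) atTop ≤ flim t ∧ flim t ≤ limsup (fun ℓ => f ℓ t) atTop := by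
  have hIccμ : ∀ᵐ t ∂μ, t ∈ Icc (0:ℝ) T :=
    (ae_restrict_mem measurableSet_Icc).filter_mono hμ1.ae_le
  set F : ℕ → ℝ → ℝ := fun ℓ => ((hL2 ℓ).1).mk (f ℓ) with hF_def
  set G : ℝ → ℝ := (hlimL2.1).mk flim with hG_def
  have hFm : ∀ ℓ, Measurable (F ℓ) := fun ℓ => ((hL2 ℓ).1).stronglyMeasurable_mk.measurable
  have hGm : Measurable G := hlimL2.1.stronglyMeasurable_mk.measurable
  have hFe : ∀ ℓ, f ℓ =ᵐ[μ] F ℓ := fun ℓ => ((hL2 ℓ).1).ae_eq_mk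
  have hGe : flim =ᵐ[μ] G := hlimL2.1.ae_eq_mk
  have hF2 : ∀ ℓ, MemLp (F ℓ) 2 μ := fun ℓ => (hL2 ℓ).ae_eq (hFe ℓ)
  have hG2 : MemLp G 2 μ := hlimL2.ae_eq hGe
  have hbdμ : ∀ᵐ t ∂μ, ∀ ℓ, |F ℓ t| ≤ 1 := by
    rw [ae_all_iff]
    intro ℓ
    filter_upwards [hIccμ, hFe ℓ] with t ht heq
    rw [← heq]
    exact hbd ℓ t ht
  have hweak' : ∀ g : ℝ → ℝ, MemLp g 2 μ →
      Tendsto (fun ℓ => ∫ t, F ℓ t * g t ∂μ) atTop (nhds (∫ t, G t * g t ∂μ)) := by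
    intro g hg
    have h1 : ∀ ℓ, ∫ t, F ℓ t * g t ∂μ = ∫ t, f ℓ t * g t ∂μ := fun ℓ =>
      integral_congr_ae (((hFe ℓ).symm).mul (Filter.EventuallyEq.refl _ g))
    have h2 : ∫ t, G t * g t ∂μ = ∫ t, flim t * g t ∂μ :=
      integral_congr_ae (hGe.symm.mul (Filter.EventuallyEq.refl _ g))
    simp only [h1, h2]
    exact hweak g hg
  have H1 : ∀ᵐ t ∂μ, G t ≤ limsup (fun ℓ => F ℓ t) atTop :=
    aux_limsup μ F G hFm hGm hbdμ hF2 hG2 hweak'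
  have H2 : ∀ᵐ t ∂μ, liminf (fun ℓ => F ℓ t) atTop ≤ G t := by
    have hneg := aux_limsup μ (fun ℓ t => -F ℓ t) (fun t => -G t)
      (fun ℓ => (hFm ℓ).neg) hGm.neg
      (hbdμ.mono fun t ht ℓ => by rw [abs_neg]; exact ht ℓ)
      (fun ℓ => by exact (hF2 ℓ).neg) (by exact hG2.neg)
      (fun g hg => by
        have h1 : ∀ ℓ, ∫ t, -F ℓ t * g t ∂μ = -∫ t, F ℓ t * g t ∂μ := fun ℓ => by
          rw [← integral_neg]
          congr 1
          funext t
          ring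
        have h2 : ∫ t, -G t * g t ∂μ = -∫ t, G t * g t ∂μ := by
          rw [← integral_neg]
          congr 1
          funext t
          ring
        simp only [h1, h2]
        exact (hweak' g hg).neg)
    filter_upwards [hneg] with t ht
    have heq : limsup (fun ℓ => -F ℓ t) atTop = -liminf (fun ℓ => F ℓ t) atTop :=
      limsup_neg_real _
    rw [heq] at ht
    linarith
  have Hμ : ∀ᵐ t ∂μ,
      liminf (fun ℓ => f ℓ t) atTop ≤ flim t ∧ flim t ≤ limsup (fun ℓ => f ℓ t) atTop := by
    have hfe : ∀ᵐ t ∂μ, ∀ ℓ, f ℓ t = F ℓ t := ae_all_iff.2 hFe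
    filter_upwards [H1, H2, hfe, hGe] with t h1 h2 hf hg
    have hfun : (fun ℓ => f ℓ t) = fun ℓ => F ℓ t := funext hf
    rw [hfun, hg]
    exact ⟨h2, h1⟩
  exact Hμ.filter_mono hμ2.ae_le
end
end

section
/- Let T > 0 and let μ be a measure on [0,T] that is mutually absolutely continuous with respect to Lebesgue measure on [0,T]. Let (y_ℓ) be a sequence of functions y_ℓ : [0,T] → ℝ^q with |y_ℓ(t)| ≤ 1 for all ℓ and all t ∈ [0,T], and let (S_ℓ(t)) be sets S_ℓ(t) ⊆ ℝ^q with y_ℓ(t) ∈ S_ℓ(t) for all ℓ ∈ ℕ and t ∈ [0,T]. If (y_ℓ) converges weakly to y in L²(μ; ℝ^q), then for almost every t ∈ [0,T], y(t) belongs to the closure of the convex hull of the outer limit limsup_{ℓ→∞} S_ℓ(t). -/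
open MeasureTheory Set Filter
open scoped RealInnerProductSpace

noncomputable section

/-- The outer limit (Kuratowski limit superior) of a sequence of sets in `ℝ^q`. -/
def outerLimit {q : ℕ} (S : ℕ → Set (Vec q)) : Set (Vec q) :=
  {ξ | ∃ φ : ℕ → ℕ, StrictMono φ ∧ ∃ ξs : ℕ → Vec q,
    (∀ k, ξs k ∈ S (φ k)) ∧ Tendsto ξs atTop (nhds ξ)}

/-- Finite-dimensional fact: if `ξ` belongs to the closed convex hull of every tail of a
bounded sequence `x` with `x ℓ ∈ S ℓ`, then `ξ` belongs to the closed convex hull of the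
outer limit of `S`. -/
theorem fd_lemma {q : ℕ} (x : ℕ → Vec q) (S : ℕ → Set (Vec q))
    (hb : ∀ ℓ, ‖x ℓ‖ ≤ 1) (hm : ∀ ℓ, x ℓ ∈ S ℓ) (ξ : Vec q)
    (hξ : ∀ n, ξ ∈ closure (convexHull ℝ (x '' Ici n))) :
    ξ ∈ closure (convexHull ℝ (outerLimit S)) := by
  by_contra h
  obtain ⟨f, u, hfu, hu⟩ := geometric_hahn_banach_closed_point
    ((convex_convexHull ℝ _).closure) isClosed_closure h
  have hev : ∀ᶠ ℓ in atTop, f (x ℓ) < u := by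
    by_contra hc
    rw [not_eventually] at hc
    obtain ⟨φ, hφ, hφP⟩ := extraction_of_frequently_atTop (hc.mono fun ℓ h => not_lt.mp h)
    obtain ⟨a, ha, ψ, hψ, hta⟩ := (isCompact_closedBall (0 : Vec q) 1).tendsto_subseq
      (x := fun k => x (φ k)) (fun k => by simpa [mem_closedBall_zero_iff] using hb (φ k))
    have haO : a ∈ outerLimit S :=
      ⟨φ ∘ ψ, hφ.comp hψ, fun k => x (φ (ψ k)), fun k => hm _, hta⟩
    have h1 : f a < u := hfu a (subset_closure (subset_convexHull ℝ _ haO))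
    have h2 : u ≤ f a := le_of_tendsto_of_tendsto' tendsto_const_nhds
      ((f.continuous.tendsto a).comp hta) (fun k => hφP (ψ k))
    exact absurd h1 (not_lt.mpr h2)
  obtain ⟨N, hN⟩ := hev.exists_forall_of_atTop
  have hsub : closure (convexHull ℝ (x '' Ici N)) ⊆ {z | f z ≤ u} := by
    refine closure_minimal (convexHull_min ?_ ?_) ?_
    · rintro v ⟨ℓ, hℓ, rfl⟩
      exact (hN ℓ hℓ).le
    · exact convex_halfSpace_le f.toLinearMap.isLinear u
    · exact isClosed_le f.continuous continuous_const
  exact absurd hu (not_lt.mpr (hsub (hξ N)))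

/-- The coercion to functions of a finite weighted sum in `Lp` agrees a.e. with the pointwise
weighted sum. -/
theorem lp_coeFn_wsum {α : Type*} {m : MeasurableSpace α} {μ : Measure α} {q : ℕ}
    {p : ENNReal} {ι : Type} (s : Finset ι) (w : ι → ℝ) (f : ι → Lp (Vec q) p μ) :
    (↑(∑ i ∈ s, w i • f i) : α → Vec q) =ᵐ[μ] fun a => ∑ i ∈ s, w i • (f i : α → Vec q) a := by
  classical
  induction s using Finset.induction_on with
  | empty => simp only [Finset.sum_empty]; exact Lp.coeFn_zero _ _ _
  | @insert a s ha ih =>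
    simp only [Finset.sum_insert ha]
    filter_upwards [Lp.coeFn_add (w a • f a) (∑ i ∈ s, w i • f i),
      Lp.coeFn_smul (w a) (f a), ih] with t h1 h2 h3
    simp only [h1, Pi.add_apply, h2, Pi.smul_apply, h3]

theorem stmt5 {q : ℕ} (T : ℝ) (hT : 0 < T) (μ : Measure ℝ)
    -- `μ` and Lebesgue measure on `[0,T]` are mutually absolutely continuous
    (hμ1 : μ ≪ volume.restrict (Icc (0:ℝ) T))
    (hμ2 : volume.restrict (Icc (0:ℝ) T) ≪ μ)
    (y : ℕ → ℝ → Vec q) (S : ℕ → ℝ → Set (Vec q)) (ylim : ℝ → Vec q)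
    (hbd : ∀ ℓ, ∀ t ∈ Icc (0:ℝ) T, ‖y ℓ t‖ ≤ 1)
    (hmem : ∀ ℓ, ∀ t ∈ Icc (0:ℝ) T, y ℓ t ∈ S ℓ t)
    -- `(y ℓ)` converges weakly to `ylim` in `L²(μ; ℝ^q)`
    (hL2 : ∀ ℓ, MemLp (y ℓ) 2 μ) (hlimL2 : MemLp ylim 2 μ)
    (hweak : ∀ g : ℝ → Vec q, MemLp g 2 μ →
      Tendsto (fun ℓ => ∫ t, ⟪y ℓ t, g t⟫ ∂μ) atTop (nhds (∫ t, ⟪ylim t, g t⟫ ∂μ))) :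
    ∀ᵐ t ∂(volume.restrict (Icc (0:ℝ) T)),
      ylim t ∈ closure (convexHull ℝ (outerLimit (fun ℓ => S ℓ t))) := by
  classical
  set Y : ℕ → Lp (Vec q) 2 μ := fun ℓ => (hL2 ℓ).toLp (y ℓ) with hY
  set Z : Lp (Vec q) 2 μ := hlimL2.toLp ylim with hZ
  -- Step A: Mazur-type: `Z` is in the closed convex hull of every tail in `L²`.
  have hA : ∀ n : ℕ, Z ∈ closure (convexHull ℝ (Y '' Ici n)) := by
    intro n
    by_contra h
    obtain ⟨f, u, hfu, hu⟩ := geometric_hahn_banach_closed_point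
      ((convex_convexHull ℝ _).closure) isClosed_closure h
    set g : Lp (Vec q) 2 μ := (InnerProductSpace.toDual ℝ (Lp (Vec q) 2 μ)).symm f with hg
    have hgf : ∀ z : Lp (Vec q) 2 μ, ⟪g, z⟫ = f z := fun z =>
      InnerProductSpace.toDual_symm_apply
    have hfy : ∀ w : Lp (Vec q) 2 μ, f w = ∫ t, ⟪(w : ℝ → Vec q) t, (g : ℝ → Vec q) t⟫ ∂μ := by
      intro w
      rw [← hgf w, L2.inner_def]
      exact integral_congr_ae (Eventually.of_forall fun t => real_inner_comm _ _)
    have hfy' : ∀ ℓ, f (Y ℓ) = ∫ t, ⟪y ℓ t, (g : ℝ → Vec q) t⟫ ∂μ := by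
      intro ℓ
      rw [hfy]
      refine integral_congr_ae ?_
      filter_upwards [(hL2 ℓ).coeFn_toLp] with t ht
      rw [hY]; simp only [ht]
    have hfZ : f Z = ∫ t, ⟪ylim t, (g : ℝ → Vec q) t⟫ ∂μ := by
      rw [hfy]
      refine integral_congr_ae ?_
      filter_upwards [hlimL2.coeFn_toLp] with t ht
      rw [hZ]; simp only [ht]
    have hten : Tendsto (fun ℓ => f (Y ℓ)) atTop (nhds (f Z)) := by
      rw [hfZ]
      simp_rw [hfy']
      exact hweak _ (Lp.memLp g)
    have hle : f Z ≤ u := by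
      refine le_of_tendsto hten ?_
      filter_upwards [eventually_ge_atTop n] with ℓ hℓ
      exact (hfu (Y ℓ) (subset_closure (subset_convexHull ℝ _ ⟨ℓ, hℓ, rfl⟩))).le
    exact absurd hu (not_lt.mpr hle)
  -- Step B: choose convex combinations converging to `Z` in `L²`.
  have hzex : ∀ n : ℕ, ∃ w ∈ convexHull ℝ (Y '' Ici n), dist Z w < 1 / (n + 1) := by
    intro n
    exact Metric.mem_closure_iff.mp (hA n) _ (by positivity)
  choose z hz1 hz2 using hzex
  have hzt : Tendsto z atTop (nhds Z) := by
    rw [tendsto_iff_dist_tendsto_zero]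
    refine squeeze_zero (fun n => dist_nonneg) (fun n => ?_)
      tendsto_one_div_add_atTop_nhds_zero_nat
    rw [dist_comm]
    exact (hz2 n).le
  -- pointwise membership of the convex combinations a.e.
  have hptw : ∀ n : ℕ, ∀ᵐ t ∂μ,
      (z n : ℝ → Vec q) t ∈ convexHull ℝ ((fun ℓ => y ℓ t) '' Ici n) := by
    intro n
    have := hz1 n
    rw [convexHull_eq] at this
    obtain ⟨ι, tset, w, p, hw0, hw1, hp, hzc⟩ := this
    have hzsum : z n = ∑ i ∈ tset, w i • p i := by
      rw [← hzc, Finset.centerMass_eq_of_sum_1 _ _ hw1]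
    have hmemae : ∀ᵐ t ∂μ, ∀ i ∈ tset, ∃ ℓ ≥ n, (p i : ℝ → Vec q) t = y ℓ t := by
      rw [eventually_all_finset]
      intro i hi
      obtain ⟨ℓ, hℓ, hYl⟩ := hp i hi
      filter_upwards [(hL2 ℓ).coeFn_toLp] with t ht
      exact ⟨ℓ, hℓ, by rw [← hYl]; exact ht⟩
    have hcoe : (z n : ℝ → Vec q) =ᵐ[μ] fun t => ∑ i ∈ tset, w i • (p i : ℝ → Vec q) t := by
      rw [hzsum]
      exact lp_coeFn_wsum tset w p
    filter_upwards [hmemae, hcoe] with t h1 h2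
    rw [h2]
    have : tset.centerMass w (fun i => (p i : ℝ → Vec q) t)
        = ∑ i ∈ tset, w i • (p i : ℝ → Vec q) t :=
      Finset.centerMass_eq_of_sum_1 _ _ hw1
    rw [← this]
    refine Finset.centerMass_mem_convexHull _ hw0 (by rw [hw1]; norm_num) ?_
    intro i hi
    obtain ⟨ℓ, hℓ, hpe⟩ := h1 i hi
    exact ⟨ℓ, hℓ, hpe.symm⟩
  -- a.e. pointwise convergent subsequence
  have htim : TendstoInMeasure μ (fun n => (z n : ℝ → Vec q)) atTop (Z : ℝ → Vec q) := by
    refine tendstoInMeasure_of_tendsto_eLpNorm_of_ne_top (p := 2) (by norm_num) (by norm_num)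
      (fun n => Lp.aestronglyMeasurable _) (Lp.aestronglyMeasurable _) ?_
    exact (Lp.tendsto_Lp_iff_tendsto_eLpNorm' z Z).mp hzt
  obtain ⟨ns, hns, hnsae⟩ := htim.exists_seq_tendsto_ae
  have hZae : (Z : ℝ → Vec q) =ᵐ[μ] ylim := hlimL2.coeFn_toLp
  have big : ∀ᵐ t ∂μ,
      (∀ n, (z n : ℝ → Vec q) t ∈ convexHull ℝ ((fun ℓ => y ℓ t) '' Ici n)) ∧
      Tendsto (fun k => (z (ns k) : ℝ → Vec q) t) atTop (nhds (ylim t)) := by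
    have hall : ∀ᵐ t ∂μ, ∀ n, (z n : ℝ → Vec q) t ∈ convexHull ℝ ((fun ℓ => y ℓ t) '' Ici n) :=
      (ae_all_iff).mpr hptw
    filter_upwards [hall, hnsae, hZae] with t h1 h2 h3
    exact ⟨h1, h3 ▸ h2⟩
  have big' : ∀ᵐ t ∂(volume.restrict (Icc (0:ℝ) T)),
      (∀ n, (z n : ℝ → Vec q) t ∈ convexHull ℝ ((fun ℓ => y ℓ t) '' Ici n)) ∧
      Tendsto (fun k => (z (ns k) : ℝ → Vec q) t) atTop (nhds (ylim t)) :=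
    big.filter_mono hμ2.ae_le
  filter_upwards [big', ae_restrict_mem measurableSet_Icc] with t ⟨hP, hten⟩ ht
  refine fd_lemma (fun ℓ => y ℓ t) (fun ℓ => S ℓ t)
    (fun ℓ => hbd ℓ t ht) (fun ℓ => hmem ℓ t ht) (ylim t) ?_
  intro n
  refine mem_closure_of_tendsto hten ?_
  filter_upwards [eventually_ge_atTop n] with k hk
  have hk' : n ≤ ns k := hk.trans hns.le_apply
  exact convexHull_mono (image_mono (Ici_subset_Ici.mpr hk')) (hP (ns k))
end
end

section
/- Let T > 0 and let F : [0,T] × ℝⁿ → Set ℝⁿ satisfy: (A1) F(t,·) is maximal monotone for each t ∈ [0,T]; (A2) there is a nondecreasing absolutely continuous φ : [0,T] → ℝ with sup_{z ∈ dom F(s,·)} dist(z, dom F(t,·)) ≤ φ(t) − φ(s) for all 0 ≤ s ≤ t ≤ T; and (A3′) for every r > 0 there is a constant σ_r ≥ 0 with |F⁰(t,x)| ≤ σ_r (1 + |x|) for all t ∈ [0,T] and all x ∈ dom F(t,·) with |x| ≤ r. Let 0 = t₀ < t₁ < ⋯ < t_K = T be a partition with step sizes h_k = t_k − t_{k−1},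 let x₀ be in the closure of dom F(0,·), and let x₁,…,x_K ∈ ℝⁿ satisfy (x_k − x_{k+1})/h_{k+1} ∈ F(t_{k+1}, x_{k+1}) for k = 0,…,K−1 (in particular x_{k+1} ∈ dom F(t_{k+1},·)). Fix r_α > α := |x₀| + φ(T) − φ(0), set β := α + φ(T) − φ(0) + (1+α) σ_{r_α} T, fix r_γ > γ := β + φ(T) − φ(0), and define ψ(t) := t + 2φ(t) + (1+γ) σ_{r_γ} t for t ∈ [0,T]. Then |x_k| ≤ β and |x_k − x_{k−1}| ≤ ψ(t_k) − ψ(t_{k−1}) for each k ∈ {1,…,K}. -/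
open MeasureTheory Set Filter
open scoped RealInnerProductSpace

noncomputable section

def svDom {n : ℕ} (G : Vec n → Set (Vec n)) : Set (Vec n) := {x | (G x).Nonempty}

def IsMaximalMonotoneSV {n : ℕ} (G : Vec n → Set (Vec n)) : Prop :=
  IsMonotoneSV G ∧ ∀ x y : Vec n, (∀ ξ η : Vec n, η ∈ G ξ → 0 ≤ ⟪x - ξ, y - η⟫) → y ∈ G x

set_option maxHeartbeats 1000000 in
theorem stmt6 {n : ℕ} (T : ℝ) (hT : 0 < T) (F : ℝ → Vec n → Set (Vec n))
    -- (A1)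
    (hA1 : ∀ t ∈ Icc (0:ℝ) T, IsMaximalMonotoneSV (F t))
    -- (A2): `φ` nondecreasing and absolutely continuous
    (φ : ℝ → ℝ) (hφmono : MonotoneOn φ (Icc 0 T))
    (hφAC : ∃ gφ : ℝ → ℝ, IntegrableOn gφ (Icc 0 T) ∧
      ∀ t ∈ Icc (0:ℝ) T, φ t = φ 0 + ∫ s in (0:ℝ)..t, gφ s)
    (hA2 : ∀ s t : ℝ, 0 ≤ s → s ≤ t → t ≤ T →
      ∀ z ∈ svDom (F s), Metric.infDist z (svDom (F t)) ≤ φ t - φ s)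
    -- (A3′): constant bound `σ r` on the least-norm element of `F(t,x)` for `‖x‖ ≤ r`
    (σ : ℝ → ℝ)
    (hA3 : ∀ r : ℝ, 0 < r → 0 ≤ σ r ∧ ∀ t ∈ Icc (0:ℝ) T, ∀ x ∈ svDom (F t), ‖x‖ ≤ r →
      sInf ((fun y => ‖y‖) '' F t x) ≤ σ r * (1 + ‖x‖))
    -- partition `0 = t₀ < t₁ < ⋯ < t_K = T`
    (K : ℕ) (hK : 0 < K) (t : ℕ → ℝ) (ht0 : t 0 = 0) (htK : t K = T)
    (htlt : ∀ k < K, t k < t (k + 1))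
    -- discrete scheme: `(x_k − x_{k+1})/h_{k+1} ∈ F(t_{k+1}, x_{k+1})`, `x₀ ∈ cl dom F(0,·)`
    (x : ℕ → Vec n) (hx0 : x 0 ∈ closure (svDom (F 0)))
    (hiter : ∀ k < K, (t (k + 1) - t k)⁻¹ • (x k - x (k + 1)) ∈ F (t (k + 1)) (x (k + 1)))
    -- constants
    (α rα β γ rγ : ℝ)
    (hα : α = ‖x 0‖ + φ T - φ 0) (hrα : α < rα)
    (hβ : β = α + φ T - φ 0 + (1 + α) * σ rα * T)
    (hγ : γ = β + φ T - φ 0) (hrγ : γ < rγ)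
    (ψ : ℝ → ℝ) (hψ : ∀ s, ψ s = s + 2 * φ s + (1 + γ) * σ rγ * s) :
    ∀ k : ℕ, 1 ≤ k → k ≤ K →
      ‖x k‖ ≤ β ∧ ‖x k - x (k - 1)‖ ≤ ψ (t k) - ψ (t (k - 1)) := by
  -- partition monotonicity
  have tmono : ∀ j k : ℕ, j ≤ k → k ≤ K → t j ≤ t k := by
    intro j k hjk hkK
    induction k with
    | zero => interval_cases j; exact le_rfl
    | succ k ih =>
      rcases eq_or_lt_of_le hjk with rfl | h
      · exact le_rfl
      · exact (ih (Nat.lt_succ_iff.mp h) (le_trans (Nat.le_succ k) hkK)).trans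
          (htlt k (lt_of_lt_of_le (Nat.lt_succ_self k) hkK)).le
  have tnonneg : ∀ k, k ≤ K → 0 ≤ t k := fun k hk => ht0 ▸ tmono 0 k (Nat.zero_le k) hk
  have tleT : ∀ k, k ≤ K → t k ≤ T := fun k hk => htK ▸ tmono k K hk le_rfl
  have hmem : ∀ k, k ≤ K → t k ∈ Icc (0:ℝ) T := fun k hk => ⟨tnonneg k hk, tleT k hk⟩
  have h0T : (0:ℝ) ∈ Icc (0:ℝ) T := ⟨le_rfl, hT.le⟩
  have hTT : T ∈ Icc (0:ℝ) T := ⟨hT.le, le_rfl⟩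
  have hφ0T : φ 0 ≤ φ T := hφmono h0T hTT hT.le
  -- φ values along partition
  have hφt : ∀ k, k ≤ K → φ 0 ≤ φ (t k) ∧ φ (t k) ≤ φ T := fun k hk =>
    ⟨hφmono h0T (hmem k hk) (tnonneg k hk), hφmono (hmem k hk) hTT (tleT k hk)⟩
  -- positivity of constants
  have hα0 : 0 ≤ α := by rw [hα]; have := norm_nonneg (x 0); linarith
  have hrα0 : (0:ℝ) < rα := lt_of_le_of_lt hα0 hrα
  have hσα : 0 ≤ σ rα := (hA3 rα hrα0).1
  have h1α : (0:ℝ) ≤ 1 + α := by linarith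
  have hβα : α ≤ β := by
    linarith [hβ, hφ0T, mul_nonneg (mul_nonneg h1α hσα) hT.le]
  have hβ0 : 0 ≤ β := le_trans hα0 hβα
  have hγ0 : 0 ≤ γ := by rw [hγ]; linarith
  have hrγ0 : (0:ℝ) < rγ := lt_of_le_of_lt hγ0 hrγ
  have hσγ : 0 ≤ σ rγ := (hA3 rγ hrγ0).1
  -- selection lemma
  have sel : ∀ r : ℝ, 0 < r → ∀ s ∈ Icc (0:ℝ) T, ∀ y ∈ svDom (F s), ‖y‖ ≤ r →
      ∀ ε : ℝ, 0 < ε → ∃ η ∈ F s y, ‖η‖ ≤ σ r * (1 + ‖y‖) + ε := by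
    intro r hr s hs y hy hyr ε hε
    have h1 := (hA3 r hr).2 s hs y hy hyr
    have hne : ((fun y => ‖y‖) '' F s y).Nonempty := hy.image _
    obtain ⟨a, ⟨η, hη, rfl⟩, ha⟩ :=
      exists_lt_of_csInf_lt hne (lt_of_le_of_lt h1 (lt_add_of_pos_right _ hε))
    exact ⟨η, hη, ha.le⟩
  -- near-point lemma
  have near : ∀ (D : Set (Vec n)), D.Nonempty → ∀ (z : Vec n) (c : ℝ),
      Metric.infDist z D ≤ c → ∀ ε : ℝ, 0 < ε → ∃ w ∈ D, ‖z - w‖ ≤ c + ε := by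
    intro D hD z c hc ε hε
    obtain ⟨w, hw, hdw⟩ := (Metric.infDist_lt_iff hD).mp (lt_of_le_of_lt hc (lt_add_of_pos_right _ hε))
    exact ⟨w, hw, by rw [← dist_eq_norm]; exact hdw.le⟩
  -- infDist bound for x 0 (in closure of the domain)
  have hx0inf : ∀ k, k ≤ K → Metric.infDist (x 0) (svDom (F (t k))) ≤ φ (t k) - φ 0 := by
    intro k hk
    have hcl : closure (svDom (F 0)) ⊆
        {z : Vec n | Metric.infDist z (svDom (F (t k))) ≤ φ (t k) - φ 0} := by
      apply closure_minimal
      · intro z hz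
        exact hA2 0 (t k) le_rfl (tnonneg k hk) (tleT k hk) z hz
      · exact isClosed_le (Metric.continuous_infDist_pt _) continuous_const
    exact hcl hx0
  -- key monotonicity inequality
  have key : ∀ k, k < K → ∀ ξ η : Vec n, η ∈ F (t (k + 1)) ξ →
      ‖x (k + 1) - ξ‖ ≤ ‖x k - ξ‖ + (t (k + 1) - t k) * ‖η‖ := by
    intro k hk ξ η hη
    set h := t (k + 1) - t k with hh
    have hpos : 0 < h := sub_pos.mpr (htlt k hk)
    have hmono := (hA1 (t (k + 1)) (hmem (k + 1) hk)).1
    have h0 := hmono (x (k + 1)) ξ (h⁻¹ • (x k - x (k + 1))) η (hiter k hk) hη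
    set a := x (k + 1) - ξ with ha
    rw [inner_sub_right, real_inner_smul_right] at h0
    have e1 : x k - x (k + 1) = (x k - ξ) - a := by rw [ha]; abel
    have e2 : ⟪a, x k - x (k + 1)⟫ = ⟪a, x k - ξ⟫ - ‖a‖ ^ 2 := by
      rw [e1, inner_sub_right, real_inner_self_eq_norm_sq]
    have hc : ⟪a, x k - ξ⟫ ≤ ‖a‖ * ‖x k - ξ‖ := real_inner_le_norm a _
    have hc2 : -(‖a‖ * ‖η‖) ≤ ⟪a, η⟫ := (abs_le.mp (abs_real_inner_le_norm a η)).1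
    have e3 : h * (h⁻¹ * ⟪a, x k - x (k + 1)⟫ - ⟪a, η⟫)
        = ⟪a, x k - x (k + 1)⟫ - h * ⟪a, η⟫ := by
      field_simp
    have h0' : 0 ≤ ⟪a, x k - x (k + 1)⟫ - h * ⟪a, η⟫ := by
      rw [← e3]; exact mul_nonneg hpos.le h0
    have hmul : h * (-(‖a‖ * ‖η‖)) ≤ h * ⟪a, η⟫ := mul_le_mul_of_nonneg_left hc2 hpos.le
    have hsq : ‖a‖ ^ 2 ≤ ‖a‖ * ‖x k - ξ‖ + h * (‖a‖ * ‖η‖) := by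
      linarith [h0', e2, hc, hmul]
    rcases eq_or_lt_of_le (norm_nonneg a) with h' | h'
    · rw [← h']
      have h1 := norm_nonneg (x k - ξ)
      have h2 := mul_nonneg hpos.le (norm_nonneg η)
      linarith
    · have h2 : ‖a‖ * ‖a‖ ≤ ‖a‖ * (‖x k - ξ‖ + h * ‖η‖) := by
        have e : ‖a‖ * (‖x k - ξ‖ + h * ‖η‖) = ‖a‖ * ‖x k - ξ‖ + h * (‖a‖ * ‖η‖) := by ring
        have e2' : ‖a‖ * ‖a‖ = ‖a‖ ^ 2 := (sq ‖a‖).symm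
        linarith
      exact le_of_mul_le_mul_left h2 h'
  -- uniform bound on the iterates
  have bound : ∀ k, k ≤ K → ‖x k‖ ≤ β := by
    intro k hkK
    apply le_of_forall_pos_le_add
    intro ε hε
    set Dc : ℝ := 3 + T + T * σ rα with hDc
    have hDcpos : 0 < Dc := by positivity
    set δ : ℝ := min (rα - α) (ε / Dc) with hδ
    have hδpos : 0 < δ := lt_min (by linarith) (by positivity)
    set δ' : ℝ := δ / (K + 1) with hδ'
    have hδ'pos : 0 < δ' := by positivity
    have hδ'δ : δ' ≤ δ := by
      rw [hδ']
      apply div_le_self hδpos.le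
      have hKc : (0:ℝ) ≤ (K:ℝ) := Nat.cast_nonneg K
      linarith
    set M : ℝ := σ rα * (1 + α + δ) + δ' with hM
    have hM0 : 0 ≤ M := by positivity
    have claim : ∀ j, j ≤ K → ∃ z, z ∈ svDom (F (t j)) ∧
        ‖z‖ ≤ ‖x 0‖ + (φ (t j) - φ 0) + (j + 1) * δ' ∧
        ‖x j - z‖ ≤ (φ (t j) - φ 0) + (j + 1) * δ' + t j * M := by
      intro j
      induction j with
      | zero =>
        intro _
        obtain ⟨z, hz, hd⟩ := Metric.mem_closure_iff.mp hx0 δ' hδ'pos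
        have hdz : ‖x 0 - z‖ ≤ δ' := by rw [← dist_eq_norm]; exact hd.le
        refine ⟨z, by rwa [ht0], ?_, ?_⟩
        · have h1 : ‖z‖ - ‖x 0‖ ≤ ‖z - x 0‖ := norm_sub_norm_le z (x 0)
          have h2 : ‖z - x 0‖ = ‖x 0 - z‖ := norm_sub_rev z (x 0)
          rw [ht0]
          push_cast
          linarith
        · rw [ht0]
          push_cast
          linarith
      | succ j ih =>
        intro hj1
        have hjK : j ≤ K := le_trans (Nat.le_succ j) hj1
        have hjlt : j < K := hj1
        obtain ⟨z, hzdom, hz1, hz2⟩ := ih hjK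
        have hDne : (svDom (F (t (j + 1)))).Nonempty :=
          ⟨_, ⟨_, hiter j hjlt⟩⟩
        have hinf := hA2 (t j) (t (j + 1)) (tnonneg j hjK)
          (tmono j (j + 1) (Nat.le_succ j) hj1) (tleT (j + 1) hj1) z hzdom
        obtain ⟨w, hw, hzw⟩ := near _ hDne z _ hinf δ' hδ'pos
        have hφd : φ 0 ≤ φ (t j) := (hφt j hjK).1
        have hφd1 : φ (t j) ≤ φ (t (j + 1)) :=
          hφmono (hmem j hjK) (hmem (j + 1) hj1) (tmono j (j + 1) (Nat.le_succ j) hj1)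
        have hφd2 : φ (t (j + 1)) ≤ φ T := (hφt (j + 1) hj1).2
        -- norm of w
        have hwnorm : ‖w‖ ≤ ‖x 0‖ + (φ (t (j + 1)) - φ 0) + ((j + 1) + 1) * δ' := by
          have h1 : ‖w‖ - ‖z‖ ≤ ‖w - z‖ := norm_sub_norm_le w z
          have h2 : ‖w - z‖ = ‖z - w‖ := norm_sub_rev w z
          push_cast
          push_cast at hz1
          linarith
        have hcast : ((j:ℝ) + 1 + 1) * δ' ≤ δ := by
          have h1 : ((j:ℝ) + 1 + 1) ≤ (K:ℝ) + 1 := by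
            have : (j:ℝ) + 1 ≤ (K:ℝ) := by exact_mod_cast hj1
            linarith
          have h2 : ((j:ℝ) + 1 + 1) * δ' ≤ ((K:ℝ) + 1) * δ' :=
            mul_le_mul_of_nonneg_right h1 hδ'pos.le
          have h3 : ((K:ℝ) + 1) * δ' = δ := by
            rw [hδ']
            field_simp
          linarith
        have hwrα : ‖w‖ ≤ rα := by
          have h4 : ‖x 0‖ + (φ (t (j + 1)) - φ 0) ≤ α := by rw [hα]; linarith
          have h5 : δ ≤ rα - α := min_le_left _ _
          push_cast at hwnorm
          linarith
        have hwα : ‖w‖ ≤ α + δ := by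
          have h4 : ‖x 0‖ + (φ (t (j + 1)) - φ 0) ≤ α := by rw [hα]; linarith
          push_cast at hwnorm
          linarith
        obtain ⟨η, hηmem, hη⟩ := sel rα hrα0 (t (j + 1)) (hmem (j + 1) hj1) w hw hwrα δ' hδ'pos
        have hηM : ‖η‖ ≤ M := by
          have h6 : σ rα * (1 + ‖w‖) ≤ σ rα * (1 + α + δ) :=
            mul_le_mul_of_nonneg_left (by linarith) hσα
          rw [hM]; linarith
        have hkey := key j hjlt w η hηmem
        have htri : ‖x j - w‖ ≤ ‖x j - z‖ + ‖z - w‖ := by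
          have : x j - w = (x j - z) + (z - w) := by abel
          rw [this]; exact norm_add_le _ _
        have hstep : 0 < t (j + 1) - t j := sub_pos.mpr (htlt j hjlt)
        have hhM : (t (j + 1) - t j) * ‖η‖ ≤ (t (j + 1) - t j) * M :=
          mul_le_mul_of_nonneg_left hηM hstep.le
        refine ⟨w, hw, ?_, ?_⟩
        · push_cast
          linarith [hwnorm]
        push_cast
        push_cast at hz2
        linarith [hkey, htri, hzw, hz2, hhM]
    obtain ⟨z, hzdom, hz1, hz2⟩ := claim k hkK
    have hφd : φ 0 ≤ φ (t k) := (hφt k hkK).1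
    have hφd2 : φ (t k) ≤ φ T := (hφt k hkK).2
    have htri : ‖x k‖ ≤ ‖z‖ + ‖x k - z‖ := by
      have h1 : ‖x k‖ - ‖z‖ ≤ ‖x k - z‖ := norm_sub_norm_le (x k) z
      linarith
    have hcast : ((k:ℝ) + 1) * δ' ≤ δ := by
      have h1 : ((k:ℝ) + 1) ≤ (K:ℝ) + 1 := by
        have : (k:ℝ) ≤ (K:ℝ) := by exact_mod_cast hkK
        linarith
      have h2 : ((k:ℝ) + 1) * δ' ≤ ((K:ℝ) + 1) * δ' := mul_le_mul_of_nonneg_right h1 hδ'pos.le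
      have h3 : ((K:ℝ) + 1) * δ' = δ := by rw [hδ']; field_simp
      linarith
    have htM : t k * M ≤ T * M := mul_le_mul_of_nonneg_right (tleT k hkK) hM0
    have hδDc : δ * Dc ≤ ε := by
      have h1 : δ ≤ ε / Dc := min_le_right _ _
      calc δ * Dc ≤ (ε / Dc) * Dc := mul_le_mul_of_nonneg_right h1 hDcpos.le
        _ = ε := by field_simp
    have hTM : T * M = T * σ rα * (1 + α) + T * σ rα * δ + T * δ' := by rw [hM]; ring
    have hxkA : ‖x k‖ ≤ ‖x 0‖ + 2 * (φ T - φ 0) + 2 * δ + T * M := by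
      push_cast at hz1 hz2
      linarith [htri, hz1, hz2, hcast, htM, hφd, hφd2]
    have hTδ' : T * δ' ≤ T * δ := mul_le_mul_of_nonneg_left hδ'δ hT.le
    have hfin : 2 * δ + T * σ rα * δ + T * δ ≤ δ * Dc := by
      rw [hDc]; nlinarith [hδpos]
    linarith [hα, hβ, hTM, hfin, hTδ', hδDc, hxkA]
  -- the main statement
  intro k hk1 hkK
  obtain ⟨m, rfl⟩ : ∃ m, k = m + 1 := ⟨k - 1, (Nat.succ_pred_eq_of_pos hk1).symm⟩
  have hmK : m < K := hkK
  have hmK' : m ≤ K := le_trans (Nat.le_succ m) hkK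
  have hsub : m + 1 - 1 = m := by omega
  rw [hsub]
  refine ⟨bound (m + 1) hkK, ?_⟩
  have hstep : 0 < t (m + 1) - t m := sub_pos.mpr (htlt m hmK)
  have hφd1 : φ (t m) ≤ φ (t (m + 1)) :=
    hφmono (hmem m hmK') (hmem (m + 1) hkK) (tmono m (m + 1) (Nat.le_succ m) hkK)
  have incr : ‖x (m + 1) - x m‖ ≤
      2 * (φ (t (m + 1)) - φ (t m)) + (1 + γ) * σ rγ * (t (m + 1) - t m) := by
    apply le_of_forall_pos_le_add
    intro ε hε
    set D2 : ℝ := 2 + T * (σ rγ + 1) with hD2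
    have hD2pos : 0 < D2 := by positivity
    set δ : ℝ := min (rγ - γ) (ε / D2) with hδ
    have hδpos : 0 < δ := lt_min (by linarith) (by positivity)
    have hinf : Metric.infDist (x m) (svDom (F (t (m + 1)))) ≤ φ (t (m + 1)) - φ (t m) := by
      rcases Nat.eq_zero_or_pos m with rfl | hm
      · rw [ht0]
        exact hx0inf 1 hkK
      · have hxm : x m ∈ svDom (F (t m)) := by
          have h1 : m - 1 < K := lt_of_lt_of_le (Nat.pred_lt hm.ne') hmK'
          have h2 : m - 1 + 1 = m := Nat.succ_pred_eq_of_pos hm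
          have := hiter (m - 1) h1
          rw [h2] at this
          exact ⟨_, this⟩
        exact hA2 (t m) (t (m + 1)) (tnonneg m hmK')
          (tmono m (m + 1) (Nat.le_succ m) hkK) (tleT (m + 1) hkK) (x m) hxm
    have hDne : (svDom (F (t (m + 1)))).Nonempty := ⟨_, ⟨_, hiter m hmK⟩⟩
    obtain ⟨ξ, hξdom, hξ⟩ := near _ hDne (x m) _ hinf δ hδpos
    have hxmβ : ‖x m‖ ≤ β := bound m hmK'
    have hφ2 : φ (t (m + 1)) ≤ φ T := (hφt (m + 1) hkK).2
    have hφ3 : φ 0 ≤ φ (t m) := (hφt m hmK').1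
    have hξnorm : ‖ξ‖ ≤ γ + δ := by
      have h1 : ‖ξ‖ - ‖x m‖ ≤ ‖ξ - x m‖ := norm_sub_norm_le ξ (x m)
      have h2 : ‖ξ - x m‖ = ‖x m - ξ‖ := norm_sub_rev ξ (x m)
      rw [hγ]
      linarith
    have hξrγ : ‖ξ‖ ≤ rγ := by
      have h5 : δ ≤ rγ - γ := min_le_left _ _
      linarith
    obtain ⟨η, hηmem, hη⟩ := sel rγ hrγ0 (t (m + 1)) (hmem (m + 1) hkK) ξ hξdom hξrγ δ hδpos
    have hηM : ‖η‖ ≤ σ rγ * (1 + γ + δ) + δ := by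
      have h6 : σ rγ * (1 + ‖ξ‖) ≤ σ rγ * (1 + γ + δ) :=
        mul_le_mul_of_nonneg_left (by linarith) hσγ
      linarith
    have hkey := key m hmK ξ η hηmem
    have htri : ‖x (m + 1) - x m‖ ≤ ‖x (m + 1) - ξ‖ + ‖x m - ξ‖ := by
      have h1 : x (m + 1) - x m = (x (m + 1) - ξ) + (ξ - x m) := by abel
      have h2 : ‖ξ - x m‖ = ‖x m - ξ‖ := norm_sub_rev ξ (x m)
      calc ‖x (m + 1) - x m‖ ≤ ‖x (m + 1) - ξ‖ + ‖ξ - x m‖ := by rw [h1]; exact norm_add_le _ _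
        _ = ‖x (m + 1) - ξ‖ + ‖x m - ξ‖ := by rw [h2]
    have hh : (t (m + 1) - t m) * ‖η‖ ≤
        (t (m + 1) - t m) * (σ rγ * (1 + γ + δ) + δ) :=
      mul_le_mul_of_nonneg_left hηM hstep.le
    have hhT : t (m + 1) - t m ≤ T := by
      have h1 := tnonneg m hmK'
      have h2 := tleT (m + 1) hkK
      linarith
    have hδD2 : δ * D2 ≤ ε := by
      have h1 : δ ≤ ε / D2 := min_le_right _ _
      calc δ * D2 ≤ (ε / D2) * D2 := mul_le_mul_of_nonneg_right h1 hD2pos.le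
        _ = ε := by field_simp
    have hexp : (t (m + 1) - t m) * (σ rγ * (1 + γ + δ) + δ)
        ≤ (1 + γ) * σ rγ * (t (m + 1) - t m) + T * (σ rγ + 1) * δ := by
      have h1 : (t (m + 1) - t m) * ((σ rγ + 1) * δ) ≤ T * ((σ rγ + 1) * δ) :=
        mul_le_mul_of_nonneg_right hhT (by positivity)
      nlinarith [h1]
    rw [hD2] at hδD2
    linarith [htri, hkey, hξ, hh, hexp, hδD2]
  rw [hψ, hψ]
  have hσγγ : 0 ≤ (1 + γ) * σ rγ := by positivity
  nlinarith [incr, hstep.le, hσγγ]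
end
end

section
/- Let T > 0 and let F : [0,T] × ℝⁿ → Set ℝⁿ be such that F(t,·) is maximal monotone for each t ∈ [0,T]. Suppose there exists a continuous nondecreasing function r : [0,T] → ℝ such that dis(F(s,·), F(t,·)) ≤ r(t) − r(s) for all 0 ≤ s ≤ t ≤ T, i.e., ⟨y₁ − y₂, x₂ − x₁⟩ ≤ (r(t) − r(s)) (1 + |y₁| + |y₂|) whenever y₁ ∈ F(s, x₁) and y₂ ∈ F(t, x₂). Then the map t ↦ graph F(t,·) is outer semicontinuous on [0,T]: whenever t_ℓ → t* in [0,T], y_ℓ ∈ F(t_ℓ, x_ℓ), and (x_ℓ, y_ℓ) → (x, y) in ℝⁿ × ℝⁿ, it holds that y ∈ F(t*, x). -/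
open MeasureTheory Set Filter
open scoped RealInnerProductSpace

noncomputable section

theorem stmt8 {n : ℕ} (T : ℝ) (hT : 0 < T) (F : ℝ → Vec n → Set (Vec n))
    (hA1 : ∀ t ∈ Icc (0:ℝ) T, IsMaximalMonotoneSV (F t))
    -- `r` continuous and nondecreasing with `dis(F(s,·), F(t,·)) ≤ r t − r s` for `s ≤ t`
    (r : ℝ → ℝ) (hrc : ContinuousOn r (Icc 0 T)) (hrmono : MonotoneOn r (Icc 0 T))
    (hdis : ∀ s t : ℝ, 0 ≤ s → s ≤ t → t ≤ T → ∀ x₁ x₂ y₁ y₂ : Vec n,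
      y₁ ∈ F s x₁ → y₂ ∈ F t x₂ →
        ⟪y₁ - y₂, x₂ - x₁⟫ ≤ (r t - r s) * (1 + ‖y₁‖ + ‖y₂‖)) :
    -- outer semicontinuity of `t ↦ graph F(t,·)` on `[0,T]`
    ∀ (ts : ℕ → ℝ) (xs ys : ℕ → Vec n) (t' : ℝ) (x' y' : Vec n),
      (∀ ℓ, ts ℓ ∈ Icc (0:ℝ) T) → t' ∈ Icc (0:ℝ) T →
      Tendsto ts atTop (nhds t') → (∀ ℓ, ys ℓ ∈ F (ts ℓ) (xs ℓ)) →
      Tendsto xs atTop (nhds x') → Tendsto ys atTop (nhds y') → y' ∈ F t' x' := by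
  intro ts xs ys t' x' y' hts ht' htt hmem hxx hyy
  refine (hA1 t' ht').2 x' y' ?_
  intro ξ η hη
  -- key bound for each ℓ
  have key : ∀ ℓ, ⟪ys ℓ - η, ξ - xs ℓ⟫ ≤ |r (ts ℓ) - r t'| * (1 + ‖ys ℓ‖ + ‖η‖) := by
    intro ℓ
    rcases le_total (ts ℓ) t' with h | h
    · have := hdis (ts ℓ) t' (hts ℓ).1 h ht'.2 (xs ℓ) ξ (ys ℓ) η (hmem ℓ) hη
      have habs : r t' - r (ts ℓ) ≤ |r (ts ℓ) - r t'| := by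
        rw [abs_sub_comm]; exact le_abs_self _
      have hpos : (0:ℝ) ≤ 1 + ‖ys ℓ‖ + ‖η‖ := by positivity
      nlinarith [this]
    · have := hdis t' (ts ℓ) ht'.1 h (hts ℓ).2 ξ (xs ℓ) η (ys ℓ) hη (hmem ℓ)
      have heq : ⟪η - ys ℓ, xs ℓ - ξ⟫ = ⟪ys ℓ - η, ξ - xs ℓ⟫ := by
        rw [← inner_neg_neg (𝕜 := ℝ)]; simp [neg_sub]
      have habs : r (ts ℓ) - r t' ≤ |r (ts ℓ) - r t'| := le_abs_self _
      have hpos : (0:ℝ) ≤ 1 + ‖ys ℓ‖ + ‖η‖ := by positivity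
      rw [heq] at this
      nlinarith [this]
  -- limit of LHS
  have hL : Tendsto (fun ℓ => ⟪ys ℓ - η, ξ - xs ℓ⟫) atTop (nhds ⟪y' - η, ξ - x'⟫) :=
    Tendsto.inner (hyy.sub tendsto_const_nhds) (tendsto_const_nhds.sub hxx)
  -- r (ts ℓ) → r t'
  have hrt : Tendsto (fun ℓ => r (ts ℓ)) atTop (nhds (r t')) := by
    have : Tendsto ts atTop (nhdsWithin t' (Icc 0 T)) :=
      tendsto_nhdsWithin_of_tendsto_nhds_of_eventually_within _ htt (Eventually.of_forall hts)
    exact ((hrc t' ht').tendsto).comp this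
  have hR : Tendsto (fun ℓ => |r (ts ℓ) - r t'| * (1 + ‖ys ℓ‖ + ‖η‖)) atTop
      (nhds (|r t' - r t'| * (1 + ‖y'‖ + ‖η‖))) := by
    refine Tendsto.mul ((hrt.sub tendsto_const_nhds).abs) ?_
    exact (tendsto_const_nhds.add hyy.norm).add tendsto_const_nhds
  have hlim : ⟪y' - η, ξ - x'⟫ ≤ |r t' - r t'| * (1 + ‖y'‖ + ‖η‖) :=
    le_of_tendsto_of_tendsto' hL hR key
  simp only [sub_self, abs_zero, zero_mul] at hlim
  have heq2 : ⟪x' - ξ, y' - η⟫ = -⟪y' - η, ξ - x'⟫ := by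
    rw [real_inner_comm, show ξ - x' = -(x' - ξ) by abel, inner_neg_right, neg_neg]
  rw [heq2]
  linarith
end
end

section
/- Let F₁, F₂ : ℝⁿ → Set ℝⁿ be maximal monotone maps with nonempty domains. Then the Hausdorff distance between their domains is bounded by their pseudo-distance: max( sup_{z₁ ∈ dom F₁} dist(z₁, dom F₂), sup_{z₂ ∈ dom F₂} dist(z₂, dom F₁) ) ≤ dis(F₁, F₂), where both sides are taken in [0, ∞]. -/
open Set
open scoped RealInnerProductSpace ENNReal

noncomputable section

private lemma quad_bound {a b C M : ℝ} (ha : 0 ≤ a) (hb : 0 ≤ b) (hC : 0 ≤ C) (hM : 0 ≤ M)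
    (h : a^2/2 + b^2/2 ≤ M + C*a + C*b) : a ≤ 1 + 2*C + 2*M + C^2 := by
  nlinarith [sq_nonneg (b - C), sq_nonneg (a - 1)]

set_option maxHeartbeats 1600000 in
/-- Minty: a maximal monotone map with nonempty domain has a zero of `x ↦ x + F x`. -/
theorem minty0 {n : ℕ} (F : Vec n → Set (Vec n)) (hF : IsMaximalMonotoneSV F)
    (hd : (svDom F).Nonempty) : ∃ x, -x ∈ F x := by
  obtain ⟨a₀, b₀, hab₀⟩ := hd
  -- epigraph of the Fitzpatrick function
  set K : Set (Vec n × Vec n × ℝ) :=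
    {p | ∀ a b, b ∈ F a → ⟪p.1, b⟫ + ⟪a, p.2.1⟫ - ⟪a, b⟫ ≤ p.2.2} with hK
  set f : Vec n × Vec n × ℝ → ℝ := fun p => p.2.2 + ‖p.1‖^2/2 + ‖p.2.1‖^2/2 with hf
  have hfc : Continuous f := by fun_prop
  have hKclosed : IsClosed K := by
    have : K = ⋂ (a : Vec n) (b ∈ F a),
        {p : Vec n × Vec n × ℝ | ⟪p.1, b⟫ + ⟪a, p.2.1⟫ - ⟪a, b⟫ ≤ p.2.2} := by
      ext p; simp [hK]
    rw [this]
    refine isClosed_iInter fun a => isClosed_iInter fun b => isClosed_iInter fun _ => ?_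
    exact isClosed_le (by exact ((continuous_fst.inner continuous_const).add
      (continuous_const.inner (continuous_snd.fst))).sub continuous_const)
      (continuous_snd.snd)
  -- graph points are in K (with their inner product as epigraph value)
  have hmem : ∀ a b, b ∈ F a → ((a, b, (⟪a,b⟫:ℝ)) : Vec n × Vec n × ℝ) ∈ K := by
    intro a b hb a' b' hb'
    have h0 := hF.1 a a' b b' hb hb'
    simp only [inner_sub_left, inner_sub_right] at h0 ⊢
    have h1 : ⟪a', b⟫ = ⟪a, b'⟫ - ⟪a, b'⟫ + ⟪a', b⟫ := by ring
    have hc1 : ⟪b, a'⟫ = ⟪a', b⟫ := real_inner_comm _ _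
    linarith [h0]
  -- constants
  obtain ⟨m, hm⟩ : ∃ m : ℝ, m = ⟪a₀,b₀⟫ + ‖a₀‖^2/2 + ‖b₀‖^2/2 := ⟨_, rfl⟩
  obtain ⟨C, hC⟩ : ∃ C : ℝ, C = ‖a₀‖ + ‖b₀‖ + 1 := ⟨_, rfl⟩
  obtain ⟨M, hM⟩ : ∃ M : ℝ, M = m + |⟪a₀,b₀⟫| + 1 := ⟨_, rfl⟩
  have hC0 : 0 ≤ C := by rw [hC]; positivity
  have hM0 : 0 ≤ M := by
    have h0 : -|⟪a₀,b₀⟫| ≤ ⟪a₀,b₀⟫ := neg_abs_le _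
    have h1 : (0:ℝ) ≤ ‖a₀‖^2/2 := by positivity
    have h2 : (0:ℝ) ≤ ‖b₀‖^2/2 := by positivity
    rw [hM, hm]; linarith
  obtain ⟨R, hR⟩ : ∃ R : ℝ, R = 1 + 2*C + 2*M + C^2 := ⟨_, rfl⟩
  have hR0 : 0 ≤ R := by rw [hR, hC]; positivity
  obtain ⟨B, hB⟩ : ∃ B : ℝ, B = 2*C*R + |⟪a₀,b₀⟫| + |m| + 1 := ⟨_, rfl⟩
  -- bounds on the sublevel set of f within K
  have hbound : ∀ p ∈ K, f p ≤ m → ‖p.1‖ ≤ R ∧ ‖p.2.1‖ ≤ R ∧ |p.2.2| ≤ B := by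
    intro p hp hfp
    obtain ⟨x, y, c⟩ := p
    have hlow : ⟪x, b₀⟫ + ⟪a₀, y⟫ - ⟪a₀, b₀⟫ ≤ c := hp a₀ b₀ hab₀
    have hb1 : ‖b₀‖ ≤ C := by rw [hC]; linarith [norm_nonneg a₀]
    have ha1 : ‖a₀‖ ≤ C := by rw [hC]; linarith [norm_nonneg b₀]
    have hfp' : c + ‖x‖^2/2 + ‖y‖^2/2 ≤ m := hfp
    have hx0 := norm_nonneg x
    have hy0 := norm_nonneg y
    have e1 : -(‖x‖*‖b₀‖) ≤ ⟪x, b₀⟫ := neg_le_of_abs_le (abs_real_inner_le_norm _ _)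
    have e2 : -(‖a₀‖*‖y‖) ≤ ⟪a₀, y⟫ := neg_le_of_abs_le (abs_real_inner_le_norm _ _)
    have e3 : ⟪a₀,b₀⟫ ≤ |⟪a₀,b₀⟫| := le_abs_self _
    have e3' : -|⟪a₀,b₀⟫| ≤ ⟪a₀,b₀⟫ := neg_abs_le _
    have e4 : ‖x‖*‖b₀‖ ≤ C*‖x‖ := by nlinarith
    have e5 : ‖a₀‖*‖y‖ ≤ C*‖y‖ := by nlinarith
    have hq : ‖x‖^2/2 + ‖y‖^2/2 ≤ M + C*‖x‖ + C*‖y‖ := by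
      rw [hM]; linarith
    have hxR : ‖x‖ ≤ R := hR ▸ quad_bound hx0 hy0 hC0 hM0 hq
    have hyR : ‖y‖ ≤ R := hR ▸ quad_bound hy0 hx0 hC0 hM0 (by linarith)
    refine ⟨hxR, hyR, ?_⟩
    show |c| ≤ B
    have hcu : c ≤ m := by nlinarith
    have e4' : ‖x‖*‖b₀‖ ≤ C*R := by nlinarith
    have e5' : ‖a₀‖*‖y‖ ≤ C*R := by nlinarith
    have hcl : -(2*C*R + |⟪a₀,b₀⟫|) ≤ c := by linarith
    rw [abs_le]
    constructor
    · rw [hB]; linarith [abs_nonneg m]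
    · rw [hB]; linarith [le_abs_self m, abs_nonneg (⟪a₀,b₀⟫:ℝ), mul_nonneg hC0 hR0]
  -- compact truncation
  obtain ⟨T, hT⟩ : ∃ T : Set (Vec n × Vec n × ℝ),
      T = Metric.closedBall (0 : Vec n) R ×ˢ (Metric.closedBall (0 : Vec n) R ×ˢ Icc (-B) B) :=
    ⟨_, rfl⟩
  have hTc : IsCompact T := by
    rw [hT]
    exact (isCompact_closedBall _ _).prod ((isCompact_closedBall _ _).prod isCompact_Icc)
  have hTmem : ∀ p ∈ K, f p ≤ m → p ∈ T := by
    intro p hp hfp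
    obtain ⟨h1, h2, h3⟩ := hbound p hp hfp
    rw [hT]
    refine ⟨?_, ?_, ?_⟩
    · simpa [mem_closedBall_zero_iff] using h1
    · simpa [mem_closedBall_zero_iff] using h2
    · exact abs_le.mp h3
  -- the base point
  have hp₀K : ((a₀, b₀, (⟪a₀,b₀⟫:ℝ)) : Vec n × Vec n × ℝ) ∈ K := hmem a₀ b₀ hab₀
  have hfp₀ : f (a₀, b₀, (⟪a₀,b₀⟫:ℝ)) = m := by rw [hm]
  have hp₀T : ((a₀, b₀, (⟪a₀,b₀⟫:ℝ)) : Vec n × Vec n × ℝ) ∈ T :=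
    hTmem _ hp₀K (le_of_eq hfp₀)
  -- minimize f over T ∩ K
  obtain ⟨q, hqTK, hqmin⟩ := (hTc.inter_right hKclosed).exists_isMinOn
    ⟨_, hp₀T, hp₀K⟩ hfc.continuousOn
  have hminK : ∀ p ∈ K, f q ≤ f p := by
    intro p hp
    by_cases h : f p ≤ m
    · exact hqmin ⟨hTmem p hp h, hp⟩
    · calc f q ≤ f (a₀, b₀, (⟪a₀,b₀⟫:ℝ)) := hqmin ⟨hp₀T, hp₀K⟩
        _ = m := hfp₀
        _ ≤ f p := le_of_not_ge h
  obtain ⟨x₀, y₀, c₀⟩ := q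
  have hqK : ((x₀, y₀, c₀) : Vec n × Vec n × ℝ) ∈ K := hqTK.2
  clear hqmin hqTK hTmem hp₀T hTc hT hbound
  -- subgradient inequality at the minimizer
  have hfq : f (x₀, y₀, c₀) = c₀ + ‖x₀‖^2/2 + ‖y₀‖^2/2 := rfl
  have hsub : ∀ p ∈ K, c₀ ≤ p.2.2 + ⟪x₀, p.1 - x₀⟫ + ⟪y₀, p.2.1 - y₀⟫ := by
    intro p hp
    obtain ⟨x, y, c⟩ := p
    show c₀ ≤ c + ⟪x₀, x - x₀⟫ + ⟪y₀, y - y₀⟫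
    obtain ⟨A, hA⟩ : ∃ A : ℝ, A = c - c₀ + ⟪x₀, x - x₀⟫ + ⟪y₀, y - y₀⟫ := ⟨_, rfl⟩
    obtain ⟨S, hS⟩ : ∃ S : ℝ, S = ‖x - x₀‖^2 + ‖y - y₀‖^2 := ⟨_, rfl⟩
    have hS0 : 0 ≤ S := by rw [hS]; positivity
    have key : ∀ t : ℝ, 0 < t → t ≤ 1 → 0 ≤ A + t * (S/2) := by
      intro t ht0 ht1
      have hptK : ((x₀ + t • (x - x₀), y₀ + t • (y - y₀), c₀ + t * (c - c₀)) :
          Vec n × Vec n × ℝ) ∈ K := by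
        intro a b hab
        have h1 := hqK a b hab
        have h2 := hp a b hab
        show ⟪x₀ + t • (x - x₀), b⟫ + ⟪a, y₀ + t • (y - y₀)⟫ - ⟪a, b⟫ ≤ c₀ + t * (c - c₀)
        have e0 : (1-t) * (⟪x₀, b⟫ + ⟪a, y₀⟫ - ⟪a, b⟫) ≤ (1-t) * c₀ :=
          mul_le_mul_of_nonneg_left h1 (by linarith)
        have e1 : t * (⟪x, b⟫ + ⟪a, y⟫ - ⟪a, b⟫) ≤ t * c :=
          mul_le_mul_of_nonneg_left h2 ht0.le
        simp only [inner_add_left, inner_add_right, real_inner_smul_left,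
          real_inner_smul_right, inner_sub_left, inner_sub_right]
        nlinarith [e0, e1]
      have hmin_t := hminK _ hptK
      rw [hfq] at hmin_t
      have nx : ‖x₀ + t • (x - x₀)‖^2 = ‖x₀‖^2 + 2*(t*⟪x₀, x - x₀⟫) + t^2*‖x - x₀‖^2 := by
        rw [norm_add_sq_real, real_inner_smul_right, norm_smul, Real.norm_eq_abs,
          mul_pow, sq_abs]
      have ny : ‖y₀ + t • (y - y₀)‖^2 = ‖y₀‖^2 + 2*(t*⟪y₀, y - y₀⟫) + t^2*‖y - y₀‖^2 := by
        rw [norm_add_sq_real, real_inner_smul_right, norm_smul, Real.norm_eq_abs,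
          mul_pow, sq_abs]
      have hmin_t' : c₀ + ‖x₀‖^2/2 + ‖y₀‖^2/2 ≤ (c₀ + t * (c - c₀))
          + (‖x₀‖^2 + 2*(t*⟪x₀, x - x₀⟫) + t^2*‖x - x₀‖^2)/2
          + (‖y₀‖^2 + 2*(t*⟪y₀, y - y₀⟫) + t^2*‖y - y₀‖^2)/2 := by
        have := hmin_t
        show _ ≤ _
        rw [show f ((x₀ + t • (x - x₀), y₀ + t • (y - y₀), c₀ + t * (c - c₀)) :
          Vec n × Vec n × ℝ) = (c₀ + t * (c - c₀)) + ‖x₀ + t • (x - x₀)‖^2/2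
          + ‖y₀ + t • (y - y₀)‖^2/2 from rfl, nx, ny] at this
        exact this
      have ht' : 0 ≤ t * A + t^2 * (S/2) := by rw [hA, hS]; nlinarith [hmin_t']
      by_contra hcon
      push_neg at hcon
      have : t * (A + t * (S/2)) < 0 := mul_neg_of_pos_of_neg ht0 hcon
      nlinarith [this]
    have hA0 : 0 ≤ A := by
      by_contra hA0
      push_neg at hA0
      obtain ⟨t₀, ht₀⟩ : ∃ t₀ : ℝ, t₀ = min 1 ((-A)/(S+1)) := ⟨_, rfl⟩
      have ht₀0 : 0 < t₀ := by
        rw [ht₀]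
        exact lt_min one_pos (div_pos (neg_pos.2 hA0) (by linarith))
      have ht₀1 : t₀ ≤ 1 := ht₀ ▸ min_le_left _ _
      have ht₀2 : t₀ * (S+1) ≤ -A := by
        have h' : t₀ ≤ (-A)/(S+1) := ht₀ ▸ min_le_right _ _
        exact (le_div_iff₀ (by linarith)).mp h'
      have := key t₀ ht₀0 ht₀1
      nlinarith [mul_nonneg ht₀0.le hS0]
    linarith [hA0, hA.symm.le]
  -- the epigraph value at the minimizer dominates the inner product
  have hc₀ : ⟪x₀, y₀⟫ ≤ c₀ := by
    by_contra h
    push_neg at h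
    have hy₀F : y₀ ∈ F x₀ := by
      refine hF.2 x₀ y₀ fun ξ η hη => ?_
      have h1 := hqK ξ η hη
      simp only [inner_sub_left, inner_sub_right]
      linarith [h1]
    have := hqK x₀ y₀ hy₀F
    linarith [this]
  -- key inequality for all graph points
  have hineq : ∀ a b, b ∈ F a → ‖x₀ + y₀‖^2 ≤ ⟪y₀ + a, x₀ + b⟫ := by
    intro a b hab
    have h1 := hsub _ (hmem a b hab)
    simp only [inner_sub_right] at h1
    rw [norm_add_sq_real]
    simp only [inner_add_left, inner_add_right]
    have c1 := real_inner_comm x₀ a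
    have c2 := real_inner_comm y₀ x₀
    have n1 := real_inner_self_eq_norm_sq x₀
    have n2 := real_inner_self_eq_norm_sq y₀
    linarith [h1, hc₀]
  have hmax : -x₀ ∈ F (-y₀) := by
    refine hF.2 (-y₀) (-x₀) fun ξ η hη => ?_
    have h1 := hineq ξ η hη
    have e : (⟪-y₀ - ξ, -x₀ - η⟫ : ℝ) = ⟪y₀ + ξ, x₀ + η⟫ := by
      rw [show -y₀ - ξ = -(y₀ + ξ) by abel, show -x₀ - η = -(x₀ + η) by abel, inner_neg_neg]
    rw [e]
    nlinarith [h1, sq_nonneg ‖x₀ + y₀‖]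
  have hfinal := hineq (-y₀) (-x₀) hmax
  have hz : (⟪y₀ + -y₀, x₀ + -x₀⟫ : ℝ) = 0 := by simp
  rw [hz] at hfinal
  have hzero : x₀ + y₀ = 0 :=
    norm_eq_zero.mp (by nlinarith [norm_nonneg (x₀ + y₀), hfinal])
  have hy : -(-y₀) = -x₀ := by
    rw [neg_neg]
    exact eq_neg_of_add_eq_zero_right hzero
  exact ⟨-y₀, hy ▸ hmax⟩

/-- Resolvent: for `λ > 0` and any `p`, the equation `x + λ y = p, y ∈ F x` is solvable. -/
theorem resolventSV {n : ℕ} (F : Vec n → Set (Vec n)) (hF : IsMaximalMonotoneSV F)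
    (hd : (svDom F).Nonempty) {lam : ℝ} (hlam : 0 < lam) (p : Vec n) :
    ∃ x y, y ∈ F x ∧ x + lam • y = p := by
  obtain ⟨G, hGdef⟩ : ∃ G : Vec n → Set (Vec n),
      G = fun z => {v | lam⁻¹ • v ∈ F (z + p)} := ⟨_, rfl⟩
  have hmemG : ∀ z v, v ∈ G z ↔ lam⁻¹ • v ∈ F (z + p) := by
    intro z v; rw [hGdef]; rfl
  have hG : IsMaximalMonotoneSV G := by
    constructor
    · intro z₁ z₂ v₁ v₂ h1 h2
      have h0 := hF.1 (z₁ + p) (z₂ + p) _ _ ((hmemG _ _).mp h1) ((hmemG _ _).mp h2)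
      have e1 : (z₁ + p) - (z₂ + p) = z₁ - z₂ := by abel
      have e2 : lam⁻¹ • v₁ - lam⁻¹ • v₂ = lam⁻¹ • (v₁ - v₂) := by
        rw [smul_sub]
      rw [e1, e2, real_inner_smul_right] at h0
      have hinv : 0 < lam⁻¹ := inv_pos.2 hlam
      nlinarith [h0, mul_pos hlam hinv]
    · intro z v hv
      rw [hmemG]
      refine hF.2 (z + p) (lam⁻¹ • v) fun ξ η hη => ?_
      have hmem' : (lam • η) ∈ G (ξ - p) := by
        rw [hmemG, smul_smul, inv_mul_cancel₀ hlam.ne', one_smul, sub_add_cancel]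
        exact hη
      have h0 := hv (ξ - p) (lam • η) hmem'
      have e1 : z - (ξ - p) = (z + p) - ξ := by abel
      have e2 : v - lam • η = lam • (lam⁻¹ • v - η) := by
        rw [smul_sub, smul_smul, mul_inv_cancel₀ hlam.ne', one_smul]
      rw [e1, e2, real_inner_smul_right] at h0
      nlinarith [h0, inv_pos.2 hlam, mul_pos hlam (inv_pos.2 hlam)]
  have hdG : (svDom G).Nonempty := by
    obtain ⟨a₀, b₀, hab₀⟩ := hd
    refine ⟨a₀ - p, lam • b₀, ?_⟩
    rw [hmemG, smul_smul, inv_mul_cancel₀ hlam.ne', one_smul, sub_add_cancel]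
    exact hab₀
  obtain ⟨z, hz⟩ := minty0 G hG hdG
  rw [hmemG] at hz
  refine ⟨z + p, lam⁻¹ • (-z), hz, ?_⟩
  rw [smul_smul, mul_inv_cancel₀ hlam.ne', one_smul]
  abel

/-- The pseudo-distance of Vladimirov between two set-valued maps, taken in `[0,∞]`. -/
def dis {n : ℕ} (F₁ F₂ : Vec n → Set (Vec n)) : ℝ≥0∞ :=
  ⨆ (x₁ : Vec n) (y₁ ∈ F₁ x₁) (x₂ : Vec n) (y₂ ∈ F₂ x₂),
    ENNReal.ofReal (⟪y₁ - y₂, x₂ - x₁⟫ / (1 + ‖y₁‖ + ‖y₂‖))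

lemma dis_pair_le {n : ℕ} (F G : Vec n → Set (Vec n)) (x₁ y₁ x₂ y₂ : Vec n)
    (h1 : y₁ ∈ F x₁) (h2 : y₂ ∈ G x₂) :
    ENNReal.ofReal (⟪y₁ - y₂, x₂ - x₁⟫ / (1 + ‖y₁‖ + ‖y₂‖)) ≤ dis F G :=
  le_iSup_of_le x₁ (le_iSup_of_le y₁ (le_iSup_of_le h1 (le_iSup_of_le x₂
    (le_iSup_of_le y₂ (le_iSup_of_le h2 le_rfl)))))

lemma dis_comm_le {n : ℕ} (F G : Vec n → Set (Vec n)) : dis F G ≤ dis G F := by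
  refine iSup_le fun x₁ => iSup_le fun y₁ => iSup_le fun h1 => iSup_le fun x₂ =>
    iSup_le fun y₂ => iSup_le fun h2 => ?_
  have e : (⟪y₁ - y₂, x₂ - x₁⟫ : ℝ) = ⟪y₂ - y₁, x₁ - x₂⟫ := by
    rw [show y₁ - y₂ = -(y₂ - y₁) by abel, show x₂ - x₁ = -(x₁ - x₂) by abel, inner_neg_neg]
  rw [e, show (1 + ‖y₁‖ + ‖y₂‖) = (1 + ‖y₂‖ + ‖y₁‖) by ring]
  exact dis_pair_le G F x₂ y₂ x₁ y₁ h2 h1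

/-- Core estimate: the distance of any point of the domain of `F` to the domain of the
maximal monotone map `G` is at most `dis F G`. -/
lemma infEdist_le_dis {n : ℕ} (F G : Vec n → Set (Vec n)) (hG : IsMaximalMonotoneSV G)
    (hdG : (svDom G).Nonempty) {x₁ y₁ : Vec n} (hy₁ : y₁ ∈ F x₁) :
    EMetric.infEdist x₁ (svDom G) ≤ dis F G := by
  by_cases htop : dis F G = ⊤
  · simp [htop]
  obtain ⟨d, hd0, hdis⟩ : ∃ d : ℝ, 0 ≤ d ∧ dis F G = ENNReal.ofReal d :=
    ⟨(dis F G).toReal, ENNReal.toReal_nonneg, (ENNReal.ofReal_toReal htop).symm⟩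
  have key : ∀ x₂ y₂, y₂ ∈ G x₂ → ⟪y₁ - y₂, x₂ - x₁⟫ ≤ d * (1 + ‖y₁‖ + ‖y₂‖) := by
    intro x₂ y₂ h2
    have h := dis_pair_le F G x₁ y₁ x₂ y₂ hy₁ h2
    rw [hdis] at h
    have hden : (0:ℝ) < 1 + ‖y₁‖ + ‖y₂‖ := by positivity
    rcases le_or_gt (⟪y₁ - y₂, x₂ - x₁⟫ : ℝ) 0 with h0 | h0
    · nlinarith [mul_nonneg hd0 hden.le]
    · have h' : ⟪y₁ - y₂, x₂ - x₁⟫ / (1 + ‖y₁‖ + ‖y₂‖) ≤ d :=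
        (ENNReal.ofReal_le_ofReal_iff hd0).mp h
      exact (div_le_iff₀ hden).mp h'
  have main : ∀ ε : ℝ, 0 < ε → ∃ x₂ ∈ svDom G, ‖x₂ - x₁‖ ≤ d + ε := by
    intro ε hε
    obtain ⟨lam, hlamdef⟩ : ∃ lam : ℝ,
        lam = min (ε/(2*(‖y₁‖+1))) (ε*(d+ε)/(2*d*(1+‖y₁‖)+1)) := ⟨_, rfl⟩
    have hden1 : (0:ℝ) < 2*(‖y₁‖+1) := by positivity
    have hden2 : (0:ℝ) < 2*d*(1+‖y₁‖)+1 := by positivity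
    have hlam0 : 0 < lam := by
      rw [hlamdef]
      exact lt_min (div_pos hε hden1) (div_pos (by positivity) hden2)
    have hl1 : lam * (‖y₁‖+1) ≤ ε/2 := by
      have h' : lam ≤ ε/(2*(‖y₁‖+1)) := hlamdef ▸ min_le_left _ _
      have := (le_div_iff₀ hden1).mp h'
      linarith
    have hl2 : lam * (2*d*(1+‖y₁‖)+1) ≤ ε*(d+ε) := by
      have h' : lam ≤ ε*(d+ε)/(2*d*(1+‖y₁‖)+1) := hlamdef ▸ min_le_right _ _
      exact (le_div_iff₀ hden2).mp h'
    obtain ⟨x₂, y₂, hy₂, hx⟩ := resolventSV G hG hdG hlam0 x₁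
    refine ⟨x₂, ⟨y₂, hy₂⟩, ?_⟩
    obtain ⟨s, hs⟩ : ∃ s : ℝ, s = ‖y₂‖ := ⟨_, rfl⟩
    have hs0 : 0 ≤ s := hs ▸ norm_nonneg _
    have hxsub : x₂ - x₁ = -(lam • y₂) := by rw [← hx]; abel
    have hr : ‖x₂ - x₁‖ = lam * s := by
      rw [hxsub, norm_neg, norm_smul, Real.norm_eq_abs, abs_of_pos hlam0, hs]
    have hinner2 : (⟪y₂, x₂ - x₁⟫ : ℝ) = -(lam * s^2) := by
      rw [hxsub, inner_neg_right, real_inner_smul_right, real_inner_self_eq_norm_sq, hs]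
    have hinner1 : -(‖y₁‖ * (lam * s)) ≤ (⟪y₁, x₂ - x₁⟫ : ℝ) := by
      have := neg_le_of_abs_le (abs_real_inner_le_norm y₁ (x₂ - x₁))
      rwa [hr] at this
    have hkey := key x₂ y₂ hy₂
    rw [inner_sub_left, hinner2, ← hs] at hkey
    -- hkey : ⟪y₁, x₂ - x₁⟫ + lam * s^2 ≤ d * (1 + ‖y₁‖ + s)  (after moving the neg)
    rw [hr]
    by_contra hcon
    push_neg at hcon
    have hrpos : 0 < lam * s := lt_of_le_of_lt (by linarith) hcon
    have hstar : lam * s^2 - ‖y₁‖ * (lam * s) ≤ d * (1 + ‖y₁‖ + s) := by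
      linarith [hkey, hinner1]
    have hstar2 : (lam*s)^2 - lam*‖y₁‖*(lam*s) ≤ lam*d*(1+‖y₁‖) + d*(lam*s) := by
      nlinarith [mul_le_mul_of_nonneg_left hstar hlam0.le]
    nlinarith [hstar2, hl2, hε, hd0, hlam0, hrpos,
      mul_le_mul_of_nonneg_right hl1 hrpos.le,
      mul_lt_mul_of_pos_left hcon hrpos]
  rw [hdis]
  refine ENNReal.le_of_forall_pos_le_add fun ε hε _ => ?_
  obtain ⟨x₂, hx₂, hle⟩ := main ε (by exact_mod_cast hε)
  calc EMetric.infEdist x₁ (svDom G) ≤ edist x₁ x₂ := EMetric.infEdist_le_edist_of_mem hx₂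
    _ = ENNReal.ofReal ‖x₂ - x₁‖ := by
        rw [edist_dist, dist_eq_norm, norm_sub_rev]
    _ ≤ ENNReal.ofReal (d + ε) := ENNReal.ofReal_le_ofReal hle
    _ = ENNReal.ofReal d + ε := by
        rw [ENNReal.ofReal_add hd0 (by exact_mod_cast hε.le), ENNReal.ofReal_coe_nnreal]

theorem stmt9 {n : ℕ} (F₁ F₂ : Vec n → Set (Vec n))
    (h₁ : IsMaximalMonotoneSV F₁) (h₂ : IsMaximalMonotoneSV F₂)
    (hdom₁ : (svDom F₁).Nonempty) (hdom₂ : (svDom F₂).Nonempty) :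
    EMetric.hausdorffEdist (svDom F₁) (svDom F₂) ≤ dis F₁ F₂ := by
  refine EMetric.hausdorffEdist_le_of_infEdist ?_ ?_
  · rintro x ⟨y, hy⟩
    exact infEdist_le_dis F₁ F₂ h₂ hdom₂ hy
  · rintro x ⟨y, hy⟩
    exact le_trans (infEdist_le_dis F₂ F₁ h₁ hdom₁ hy) (dis_comm_le F₂ F₁)
end
end

section
/- Let M ∈ ℝ^{m×m} be positive semidefinite (not necessarily symmetric), let Q_M = { z ∈ ℝᵐ : z ≥ 0, Mz ≥ 0, ⟨z, Mz⟩ = 0 } and Q_M⁺ = { ζ ∈ ℝᵐ : ⟨ζ, z⟩ ≥ 0 for all z ∈ Q_M }. For q ∈ ℝᵐ, the following are equivalent: (i) q ∈ Q_M⁺; (ii) LCP(q, M) is feasible, i.e., there exists z ∈ ℝᵐ with z ≥ 0 and q + Mz ≥ 0; (iii) LCP(q, M) is solvable, i.e., there exists z ∈ ℝᵐ with z ≥ 0, q + Mz ≥ 0, and ⟨z, q + Mz⟩ = 0. -/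
open Finset


lemma cone_caratheodory {ι E : Type*} [Fintype ι] [AddCommGroup E] [Module ℝ E] (v : ι → E) :
    ∀ (s : Finset ι) (y : ι → ℝ), (∀ i, 0 ≤ y i) →
    ∃ (t : Finset ι) (z : ι → ℝ), t ⊆ s ∧ (∀ i, 0 ≤ z i) ∧
      (∑ i ∈ t, z i • v i = ∑ i ∈ s, y i • v i) ∧
      LinearIndependent ℝ (fun i : t => v i) := by
  classical
  intro s
  induction s using Finset.strongInductionOn with
  | _ s ih =>
    intro y hy
    by_cases hli : LinearIndependent ℝ (fun i : s => v i)
    · exact ⟨s, y, Finset.Subset.refl s, hy, rfl, hli⟩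
    · obtain ⟨g, hg0, i₁, hi₁⟩ := Fintype.not_linearIndependent_iff.mp hli
      -- extend to ι, with a sign ensuring some positive coefficient
      have key : ∀ g : s → ℝ, (∑ i : s, g i • v (i : ι) = 0) → (0 < g i₁) →
          ∃ (t : Finset ι) (z : ι → ℝ), t ⊆ s ∧ (∀ i, 0 ≤ z i) ∧
            (∑ i ∈ t, z i • v i = ∑ i ∈ s, y i • v i) ∧
            LinearIndependent ℝ (fun i : t => v i) := by
        intro g hg0 hpos
        set C : ι → ℝ := fun i => if h : i ∈ s then g ⟨i, h⟩ else 0 with hC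
        have hCsum : ∑ i ∈ s, C i • v i = 0 := by
          rw [← hg0, ← Finset.sum_coe_sort s (fun i => C i • v i)]
          exact Finset.sum_congr rfl fun i _ => by simp [hC, i.2]
        have hCi₁ : 0 < C (i₁ : ι) := by simpa [hC, i₁.2] using hpos
        -- minimize ratio over positive coefficients
        have hne : (s.filter (fun i => 0 < C i)).Nonempty :=
          ⟨i₁, Finset.mem_filter.mpr ⟨i₁.2, hCi₁⟩⟩
        obtain ⟨i₀, hi₀mem, hi₀min⟩ :=
          Finset.exists_min_image (s.filter (fun i => 0 < C i)) (fun i => y i / C i) hne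
        obtain ⟨hi₀s, hi₀pos⟩ := Finset.mem_filter.mp hi₀mem
        set r : ℝ := y i₀ / C i₀ with hr
        have hr0 : 0 ≤ r := div_nonneg (hy i₀) hi₀pos.le
        set y' : ι → ℝ := fun i => y i - r * C i with hy'
        have hy'0 : ∀ i, 0 ≤ y' i := by
          intro i
          by_cases his : i ∈ s
          · by_cases hci : 0 < C i
            · have := hi₀min i (Finset.mem_filter.mpr ⟨his, hci⟩)
              have : r * C i ≤ y i := by
                rw [hr] at this ⊢
                calc y i₀ / C i₀ * C i ≤ y i / C i * C i := by
                      exact mul_le_mul_of_nonneg_right this hci.le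
                  _ = y i := div_mul_cancel₀ _ hci.ne'
              simpa [hy'] using sub_nonneg.mpr this
            · have : C i ≤ 0 := le_of_not_gt hci
              have : 0 ≤ -(r * C i) := by nlinarith
              have := hy i
              simp only [hy']
              nlinarith
          · simp [hy', hC, his, hy i]
        have hy'i₀ : y' i₀ = 0 := by
          simp [hy', hr, div_mul_cancel₀ _ hi₀pos.ne']
        have hsum' : ∑ i ∈ s, y' i • v i = ∑ i ∈ s, y i • v i := by
          simp only [hy', sub_smul, Finset.sum_sub_distrib, mul_smul]
          rw [← Finset.smul_sum, hCsum, smul_zero, sub_zero]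
        have hsum'' : ∑ i ∈ s.erase i₀, y' i • v i = ∑ i ∈ s, y' i • v i := by
          rw [← Finset.add_sum_erase s _ hi₀s, hy'i₀, zero_smul, zero_add]
        obtain ⟨t, z, hts, hz, hzsum, hzli⟩ :=
          ih (s.erase i₀) (Finset.erase_ssubset hi₀s) y' hy'0
        exact ⟨t, z, hts.trans (Finset.erase_subset _ _), hz,
          by rw [hzsum, hsum'', hsum'], hzli⟩
      rcases lt_or_gt_of_ne hi₁ with hneg | hpos
      · obtain ⟨t, z, h1, h2, h3, h4⟩ := key (-g) (by simpa using hg0) (by simpa using hneg)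
        exact ⟨t, z, h1, h2, h3, h4⟩
      · exact key g hg0 hpos


lemma cone_isClosed {ι : Type*} [Fintype ι] {k : Type*} [Fintype k]
    (v : ι → EuclideanSpace ℝ k) :
    IsClosed {x : EuclideanSpace ℝ k | ∃ y : ι → ℝ, (∀ i, 0 ≤ y i) ∧ x = ∑ i, y i • v i} := by
  classical
  have hrepr : {x : EuclideanSpace ℝ k | ∃ y : ι → ℝ, (∀ i, 0 ≤ y i) ∧ x = ∑ i, y i • v i}
      = ⋃ (t : Finset ι), ⋃ (_ : LinearIndependent ℝ (fun i : t => v i)),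
        (fun y : t → ℝ => ∑ i : t, y i • v (i : ι)) '' {y | ∀ i, 0 ≤ y i} := by
    ext x
    simp only [Set.mem_setOf_eq, Set.mem_iUnion, Set.mem_image]
    constructor
    · rintro ⟨y, hy, rfl⟩
      obtain ⟨t, z, -, hz, hsum, hli⟩ := cone_caratheodory v Finset.univ y hy
      refine ⟨t, hli, fun i => z i, fun i => hz i, ?_⟩
      rw [← hsum, ← Finset.sum_coe_sort t (fun i => z i • v i)]
    · rintro ⟨t, hli, y, hy, rfl⟩
      refine ⟨fun i => if h : i ∈ t then y ⟨i, h⟩ else 0,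
        fun i => by by_cases h : i ∈ t <;> simp [h, hy]; , ?_⟩
      symm
      rw [← Finset.sum_subset (Finset.subset_univ t) (fun i _ hit => by simp [hit])]
      rw [← Finset.sum_coe_sort t
        (fun i => (if h : i ∈ t then y ⟨i, h⟩ else (0:ℝ)) • v i)]
      exact Finset.sum_congr rfl fun i _ => by simp [i.2]
  rw [hrepr]
  apply isClosed_iUnion_of_finite
  intro t
  apply isClosed_iUnion_of_finite
  intro hli
  -- the linear map
  let L : (t → ℝ) →ₗ[ℝ] EuclideanSpace ℝ k :=
    { toFun := fun y => ∑ i : t, y i • v (i : ι)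
      map_add' := fun a b => by simp [add_smul, Finset.sum_add_distrib]
      map_smul' := fun c a => by simp [smul_smul, Finset.smul_sum]
      }
  have hker : LinearMap.ker L = ⊥ := by
    rw [LinearMap.ker_eq_bot']
    intro g hg
    have := Fintype.linearIndependent_iff.mp hli g hg
    funext i; exact this i
  have hemb := LinearMap.isClosedEmbedding_of_injective (𝕜 := ℝ) (f := L) hker
  have hclosed : IsClosed {y : t → ℝ | ∀ i, 0 ≤ y i} := by
    have : {y : t → ℝ | ∀ i, 0 ≤ y i} = ⋂ i, {y | 0 ≤ y i} := by ext; simp [Set.mem_iInter]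
    rw [this]
    exact isClosed_iInter fun i => isClosed_le continuous_const (continuous_apply i)
  exact hemb.isClosedMap _ hclosed

lemma cone_convex {ι : Type*} [Fintype ι] {k : Type*} [Fintype k]
    (v : ι → EuclideanSpace ℝ k) :
    Convex ℝ {x : EuclideanSpace ℝ k | ∃ y : ι → ℝ, (∀ i, 0 ≤ y i) ∧ x = ∑ i, y i • v i} := by
  rintro x ⟨ya, hya, rfl⟩ x' ⟨yb, hyb, rfl⟩ a b ha hb -
  refine ⟨fun i => a * ya i + b * yb i,
    fun i => add_nonneg (mul_nonneg ha (hya i)) (mul_nonneg hb (hyb i)), ?_⟩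
  simp only [add_smul, Finset.sum_add_distrib, mul_smul, ← Finset.smul_sum]

lemma eval_sum {ι k : Type*} [Fintype ι] [Fintype k]
    (w : ι → EuclideanSpace ℝ k) (y : ι → ℝ) (j : k) :
    (∑ i, y i • w i) j = ∑ i, y i * w i j := by
  classical
  have h : ∀ s : Finset ι, (∑ i ∈ s, y i • w i) j = ∑ i ∈ s, y i * w i j := by
    intro s
    induction s using Finset.induction with
    | empty => rfl
    | insert _ _ h ih => rw [Finset.sum_insert h, Finset.sum_insert h, ← ih]; rfl
  exact h univ

lemma euclid_decomp {k : Type*} [Fintype k] [DecidableEq k] (x : EuclideanSpace ℝ k) :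
    x = ∑ j, x j • EuclideanSpace.single j (1:ℝ) := by
  apply PiLp.ext
  intro j
  rw [eval_sum]
  simp [EuclideanSpace.single_apply, mul_ite]



theorem farkas_lemma {ι κ : Type*} [Fintype ι] [Fintype κ] (A : ι → κ → ℝ) (b : ι → ℝ)
    (h : ¬ ∃ x : κ → ℝ, ∀ i, ∑ j, A i j * x j ≤ b i) :
    ∃ y : ι → ℝ, (∀ i, 0 ≤ y i) ∧ (∀ j, ∑ i, y i * A i j = 0) ∧ ∑ i, y i * b i < 0 := by
  classical
  let v : Option ι → EuclideanSpace ℝ (Option κ) := fun i' => WithLp.toLp 2 (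
    Option.elim i' (fun j' => Option.elim j' 1 (fun _ => 0))
      (fun i => (fun j' => Option.elim j' (b i) (fun j => A i j))) : Option κ → ℝ)
  let c : EuclideanSpace ℝ (Option κ) := WithLp.toLp 2 (fun j' => Option.elim j' (-1) (fun _ => 0))
  set S := {x : EuclideanSpace ℝ (Option κ) |
    ∃ y : Option ι → ℝ, (∀ i, 0 ≤ y i) ∧ x = ∑ i, y i • v i} with hS
  by_cases hc : c ∈ S
  · obtain ⟨y', hy', hceq⟩ := hc
    have heval : ∀ j' : Option κ, c j' = ∑ i', y' i' * v i' j' := by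
      intro j'
      rw [hceq, eval_sum]
    refine ⟨fun i => y' (some i), fun i => hy' _, ?_, ?_⟩
    · intro j
      have := heval (some j)
      rw [Fintype.sum_option] at this
      simpa [c, v] using this.symm
    · have := heval none
      rw [Fintype.sum_option] at this
      simp only [c, v, Option.elim] at this
      have h1 : ∑ i, y' (some i) * b i = -1 - y' none := by linarith [this]
      have := hy' none
      rw [h1]; linarith
  · obtain ⟨f, u, hfc, hfS⟩ :=
      geometric_hahn_banach_point_closed (cone_convex v) (cone_isClosed v) hc
    have h0S : (0 : EuclideanSpace ℝ (Option κ)) ∈ S := by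
      exact ⟨fun _ => 0, fun _ => le_refl _, by simp⟩
    have hu0 : u < 0 := by simpa using hfS 0 h0S
    have hfpos : ∀ z ∈ S, (0:ℝ) ≤ f z := by
      intro z hz
      by_contra hneg
      push_neg at hneg
      obtain ⟨y', hy', rfl⟩ := hz
      set t : ℝ := (u - 1) / f (∑ i, y' i • v i) with ht
      have htpos : 0 < t := div_pos_of_neg_of_neg (by linarith) hneg
      have htz : t • (∑ i, y' i • v i) ∈ S := by
        refine ⟨fun i => t * y' i, fun i => mul_nonneg htpos.le (hy' i), ?_⟩
        rw [Finset.smul_sum]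
        exact Finset.sum_congr rfl fun i _ => (smul_smul t (y' i) (v i))
      have := hfS _ htz
      rw [map_smul, smul_eq_mul, ht, div_mul_cancel₀ _ (ne_of_lt hneg)] at this
      linarith
    set U : Option κ → ℝ := fun j' => f (EuclideanSpace.single j' 1) with hU
    have hfx : ∀ x : EuclideanSpace ℝ (Option κ), f x = ∑ j', x j' * U j' := by
      intro x
      conv_lhs => rw [euclid_decomp x]
      rw [map_sum]
      exact Finset.sum_congr rfl fun j' _ => by rw [map_smul, smul_eq_mul]
    have hs : 0 < U none := by
      have h1 : (0:ℝ) ≤ f (v none) := hfpos (v none)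
        ⟨fun i' => if i' = none then 1 else 0, fun i' => by positivity, by simp⟩
      rw [hfx, Fintype.sum_option] at h1
      have h2 : f c < 0 := lt_trans hfc hu0
      rw [hfx, Fintype.sum_option] at h2
      simp only [v, c, Option.elim] at h1 h2
      simp only [zero_mul, Finset.sum_const_zero, add_zero, one_mul] at h1 h2
      linarith
    exfalso
    apply h
    refine ⟨fun j => -U (some j) / U none, fun i => ?_⟩
    have h1 : (0:ℝ) ≤ f (v (some i)) := hfpos (v (some i))
      ⟨fun i' => if i' = some i then 1 else 0, fun i' => by positivity, by simp⟩
    rw [hfx, Fintype.sum_option] at h1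
    simp only [v, Option.elim] at h1
    have hsum : ∑ j, A i j * (-U (some j) / U none)
        = (-∑ j, A i j * U (some j)) / U none := by
      rw [neg_div, Finset.sum_div, ← Finset.sum_neg_distrib]
      exact Finset.sum_congr rfl fun j _ => by ring
    rw [hsum, div_le_iff₀ hs]
    linarith

open scoped Matrix

lemma lcp_exists_of_pd {m : ℕ} (N : Matrix (Fin m) (Fin m) ℝ) (q : Fin m → ℝ) (c : ℝ)
    (hc : 0 < c) (hN : ∀ z : Fin m → ℝ, c * (z ⬝ᵥ z) ≤ z ⬝ᵥ N.mulVec z) :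
    ∃ z : Fin m → ℝ, (∀ i, 0 ≤ z i) ∧ (∀ i, 0 ≤ (q + N.mulVec z) i) ∧
      z ⬝ᵥ (q + N.mulVec z) = 0 := by
  classical
  by_cases hm : Nonempty (Fin m)
  swap
  · rw [not_nonempty_iff] at hm
    exact ⟨0, fun i => absurd (Nonempty.intro i) (not_nonempty_iff.mpr hm),
      fun i => absurd (Nonempty.intro i) (not_nonempty_iff.mpr hm), by
        simp [dotProduct]⟩
  obtain ⟨i₀⟩ := hm
  set L2 : ℝ := ∑ i, ∑ j, (N i j)^2 with hL2def
  have hL2 : 0 ≤ L2 := Finset.sum_nonneg fun i _ => Finset.sum_nonneg fun j _ => sq_nonneg _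
  -- operator bound
  have hop : ∀ d : Fin m → ℝ, (N.mulVec d) ⬝ᵥ (N.mulVec d) ≤ L2 * (d ⬝ᵥ d) := by
    intro d
    have : ∀ i, (N.mulVec d i)^2 ≤ (∑ j, (N i j)^2) * (d ⬝ᵥ d) := by
      intro i
      have := Finset.sum_mul_sq_le_sq_mul_sq Finset.univ (fun j => N i j) d
      simpa [Matrix.mulVec, dotProduct, pow_two] using this
    calc (N.mulVec d) ⬝ᵥ (N.mulVec d) = ∑ i, (N.mulVec d i)^2 := by
          simp [dotProduct, pow_two]
      _ ≤ ∑ i, (∑ j, (N i j)^2) * (d ⬝ᵥ d) := Finset.sum_le_sum fun i _ => this i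
      _ = L2 * (d ⬝ᵥ d) := by rw [← Finset.sum_mul]
  -- c^2 ≤ L2
  have hcL : c^2 ≤ L2 := by
    set e : Fin m → ℝ := fun i => if i = i₀ then 1 else 0 with he
    have hee : e ⬝ᵥ e = 1 := by simp [he, dotProduct, ite_mul]
    have h1 : c ≤ e ⬝ᵥ N.mulVec e := by have := hN e; rwa [hee, mul_one] at this
    have h2 : (e ⬝ᵥ N.mulVec e)^2 ≤ (e ⬝ᵥ e) * ((N.mulVec e) ⬝ᵥ (N.mulVec e)) := by
      have := Finset.sum_mul_sq_le_sq_mul_sq Finset.univ e (N.mulVec e)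
      simpa [dotProduct, pow_two] using this
    have h3 := hop e
    rw [hee] at h2 h3
    nlinarith
  set α : ℝ := c / (L2 + 1) with hα
  have hα0 : 0 < α := div_pos hc (by linarith)
  set K2 : ℝ := 1 - 2*α*c + α^2 * L2 with hK2
  have hK20 : 0 ≤ K2 := by
    rw [hK2, hα]
    have h : (1 : ℝ) - 2*(c/(L2+1))*c + (c/(L2+1))^2 * L2
        = ((L2+1)^2 - c^2*(L2+2)) / (L2+1)^2 := by
      field_simp
      ring
    rw [h]
    apply div_nonneg _ (by positivity)
    nlinarith
  have hK21 : K2 < 1 := by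
    have h1 : α * L2 < 2 * c := by
      rw [hα, div_mul_eq_mul_div, div_lt_iff₀ (by linarith : (0:ℝ) < L2+1)]
      nlinarith
    have h2 : α ^ 2 * L2 < α * (2 * c) := by
      calc α ^ 2 * L2 = α * (α * L2) := by ring
        _ < α * (2*c) := mul_lt_mul_of_pos_left h1 hα0
    rw [hK2]; nlinarith
  set K : ℝ := Real.sqrt K2 with hK
  have hK1 : K < 1 := by
    rw [hK]
    nlinarith [Real.sq_sqrt hK20, Real.sqrt_nonneg K2]
  -- contraction inequality on dot products
  have hcontr : ∀ d : Fin m → ℝ,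
      (d - α • N.mulVec d) ⬝ᵥ (d - α • N.mulVec d) ≤ K2 * (d ⬝ᵥ d) := by
    intro d
    have hdd : 0 ≤ d ⬝ᵥ d := by
      simp only [dotProduct]
      exact Finset.sum_nonneg fun i _ => mul_self_nonneg _
    have expand : (d - α • N.mulVec d) ⬝ᵥ (d - α • N.mulVec d)
        = d ⬝ᵥ d - 2*α*(d ⬝ᵥ N.mulVec d) + α^2 * ((N.mulVec d) ⬝ᵥ (N.mulVec d)) := by
      rw [sub_dotProduct, dotProduct_sub, dotProduct_sub,
        smul_dotProduct, dotProduct_smul, smul_dotProduct,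
        dotProduct_smul, dotProduct_comm (N.mulVec d) d]
      simp only [smul_eq_mul]
      ring
    rw [expand, hK2]
    have h1 := hN d
    have h2 := hop d
    nlinarith [mul_le_mul_of_nonneg_left h1 hα0.le, mul_le_mul_of_nonneg_left h2 (sq_nonneg α)]
  -- the map
  set E := EuclideanSpace ℝ (Fin m)
  let F : E → E := fun x => WithLp.toLp 2 (fun i => max (x i - α * ((q + N.mulVec x) i)) 0)
  have hLip : ∀ x y : E, dist (F x) (F y) ≤ K * dist x y := by
    intro x y
    set d : Fin m → ℝ := fun i => x i - y i with hd
    have hdm : N.mulVec (fun i => x i - y i) = fun i => N.mulVec x i - N.mulVec y i := by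
      have := Matrix.mulVec_sub N x y
      convert this using 2 <;> rfl
    rw [EuclideanSpace.dist_eq, EuclideanSpace.dist_eq]
    have hstep : ∀ i, dist (F x i) (F y i)^2 ≤ ((d - α • N.mulVec d) i)^2 := by
      intro i
      rw [Real.dist_eq]
      have h1 : |F x i - F y i| ≤ |(x i - α * ((q + N.mulVec x) i)) - (y i - α * ((q + N.mulVec y) i))| :=
        abs_max_sub_max_le_abs _ _ _
      have h2 : (x i - α * ((q + N.mulVec x) i)) - (y i - α * ((q + N.mulVec y) i))
          = (d - α • N.mulVec d) i := by
        simp only [hd, Pi.sub_apply, Pi.smul_apply, Pi.add_apply, smul_eq_mul, hdm]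
        ring
      rw [← h2]
      exact pow_le_pow_left₀ (abs_nonneg _) h1 2 |>.trans (by rw [sq_abs])
    have hsum : ∑ i, dist (F x i) (F y i)^2 ≤ K2 * ∑ i, dist (x i) (y i)^2 := by
      have hc2 := hcontr d
      have e1 : (d - α • N.mulVec d) ⬝ᵥ (d - α • N.mulVec d) = ∑ i, ((d - α • N.mulVec d) i)^2 := by
        simp [dotProduct, pow_two]
      have e2 : d ⬝ᵥ d = ∑ i, dist (x i) (y i)^2 := by
        simp only [dotProduct, Real.dist_eq, sq_abs]
        exact Finset.sum_congr rfl fun i _ => by simp only [hd]; ring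
      calc ∑ i, dist (F x i) (F y i)^2 ≤ ∑ i, ((d - α • N.mulVec d) i)^2 :=
            Finset.sum_le_sum fun i _ => hstep i
        _ = (d - α • N.mulVec d) ⬝ᵥ (d - α • N.mulVec d) := e1.symm
        _ ≤ K2 * (d ⬝ᵥ d) := hc2
        _ = K2 * ∑ i, dist (x i) (y i)^2 := by rw [e2]
    calc Real.sqrt (∑ i, dist (F x i) (F y i)^2) ≤ Real.sqrt (K2 * ∑ i, dist (x i) (y i)^2) :=
          Real.sqrt_le_sqrt hsum
      _ = K * Real.sqrt (∑ i, dist (x i) (y i)^2) := by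
          rw [Real.sqrt_mul hK20, hK]
  have hK0 : 0 ≤ K := Real.sqrt_nonneg _
  have hcw : ContractingWith K.toNNReal F := by
    constructor
    · exact_mod_cast (by rwa [Real.coe_toNNReal K hK0] : (K.toNNReal:ℝ) < 1)
    · apply LipschitzWith.of_dist_le_mul
      intro x y
      rw [Real.coe_toNNReal K hK0]
      exact hLip x y
  have : Nonempty E := ⟨0⟩
  set z := hcw.fixedPoint F with hz
  have hfix : F z = z := hcw.fixedPoint_isFixedPt
  set w : Fin m → ℝ := fun i => (q + N.mulVec z) i with hw
  have hzi : ∀ i, z i = max (z i - α * w i) 0 := fun i => congrFun (congrArg WithLp.ofLp hfix.symm) i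
  have hz0 : ∀ i, 0 ≤ z i := fun i => (hzi i) ▸ le_max_right _ _
  have hcomp : ∀ i, (0 ≤ w i) ∧ (z i * w i = 0) := by
    intro i
    rcases lt_or_ge 0 (z i) with hpos | hle
    · have : z i - α * w i = z i := by
        rcases max_cases (z i - α * w i) 0 with ⟨h1, h2⟩ | ⟨h1, h2⟩
        · rw [← hzi i] at h1; linarith [h1]
        · rw [← hzi i] at h1; linarith
      have hwi : w i = 0 := by
        have : α * w i = 0 := by linarith
        rcases mul_eq_zero.mp this with h | h
        · exact absurd h hα0.ne'
        · exact h
      exact ⟨hwi.ge, by rw [hwi, mul_zero]⟩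
    · have hz0i : z i = 0 := le_antisymm hle (hz0 i)
      have := hzi i
      rw [hz0i] at this
      have h2 : -(α * w i) ≤ 0 := by
        rcases max_cases (0 - α * w i) 0 with ⟨h1, h2⟩ | ⟨h1, h2⟩
        · linarith [this.trans h1]
        · linarith
      have : 0 ≤ w i := by
        by_contra hneg
        push_neg at hneg
        nlinarith
      exact ⟨this, by rw [hz0i, zero_mul]⟩
  refine ⟨fun i => z i, hz0, fun i => (hcomp i).1, ?_⟩
  simp only [dotProduct]
  exact Finset.sum_eq_zero fun i _ => (hcomp i).2


open Filter


lemma euclid_coord_tendsto {k : Type*} [Fintype k] {f : ℕ → EuclideanSpace ℝ k}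
    {a : EuclideanSpace ℝ k} (h : Filter.Tendsto f Filter.atTop (nhds a)) (i : k) :
    Filter.Tendsto (fun n => f n i) Filter.atTop (nhds (a i)) := by
  rw [tendsto_iff_dist_tendsto_zero] at h ⊢
  refine squeeze_zero (fun n => dist_nonneg) (fun n => ?_) h
  rw [EuclideanSpace.dist_eq]
  rw [show dist (f n i) (a i) = Real.sqrt (dist (f n i) (a i)^2) from
    (Real.sqrt_sq dist_nonneg).symm]
  exact Real.sqrt_le_sqrt
    (Finset.single_le_sum (f := fun j => dist (f n j) (a j)^2)
      (fun j _ => sq_nonneg _) (Finset.mem_univ i))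

lemma dot_nonneg' {m : ℕ} {a b : Fin m → ℝ} (ha : ∀ i, 0 ≤ a i) (hb : ∀ i, 0 ≤ b i) :
    0 ≤ a ⬝ᵥ b :=
  Finset.sum_nonneg fun i _ => mul_nonneg (ha i) (hb i)

lemma lcp_exists_of_strict {m : ℕ} (M : Matrix (Fin m) (Fin m) ℝ)
    (hM : ∀ z : Fin m → ℝ, 0 ≤ z ⬝ᵥ M.mulVec z) (q : Fin m → ℝ)
    (z₀ : Fin m → ℝ) (hz₀ : ∀ i, 0 ≤ z₀ i) (hw₀ : ∀ i, 0 < (q + M.mulVec z₀) i) :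
    ∃ z : Fin m → ℝ, (∀ i, 0 ≤ z i) ∧ (∀ i, 0 ≤ (q + M.mulVec z) i) ∧
      z ⬝ᵥ (q + M.mulVec z) = 0 := by
  classical
  by_cases hm : Nonempty (Fin m)
  swap
  · rw [not_nonempty_iff] at hm
    exact ⟨0, fun i => absurd ⟨i⟩ (not_nonempty_iff.mpr hm),
      fun i => absurd ⟨i⟩ (not_nonempty_iff.mpr hm), by simp [dotProduct]⟩
  set ε : ℕ → ℝ := fun k => 1/(k+1) with hεdef
  have hε0 : ∀ k, 0 < ε k := fun k => by positivity
  have hε1 : ∀ k, ε k ≤ 1 := fun k => by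
    rw [hεdef]
    rw [div_le_one (by positivity)]
    simp
  have hεlim : Tendsto ε atTop (nhds 0) := tendsto_one_div_add_atTop_nhds_zero_nat
  set N : ℕ → Matrix (Fin m) (Fin m) ℝ := fun k => M + ε k • 1 with hNdef
  have hNmul : ∀ k (x : Fin m → ℝ), (N k).mulVec x = M.mulVec x + ε k • x := by
    intro k x
    simp [hNdef, Matrix.add_mulVec, Matrix.smul_mulVec, Matrix.one_mulVec]
  have hNpd : ∀ k (x : Fin m → ℝ), ε k * (x ⬝ᵥ x) ≤ x ⬝ᵥ (N k).mulVec x := by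
    intro k x
    rw [hNmul, dotProduct_add, dotProduct_smul]
    have := hM x
    simp only [smul_eq_mul]
    linarith
  choose zk hzk0 hzkw hzkc using fun k => lcp_exists_of_pd (N k) q (ε k) (hε0 k) (hNpd k)
  obtain ⟨i₀⟩ := hm
  have huniv : (Finset.univ : Finset (Fin m)).Nonempty := ⟨i₀, Finset.mem_univ _⟩
  set β : ℝ := Finset.univ.inf' huniv (fun i => (q + M.mulVec z₀) i) with hβdef
  have hβ : 0 < β := by
    rw [hβdef, Finset.lt_inf'_iff]
    exact fun i _ => hw₀ i
  have hβle : ∀ i, β ≤ (q + M.mulVec z₀) i := fun i =>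
    Finset.inf'_le _ (Finset.mem_univ i)
  set C : ℝ := z₀ ⬝ᵥ (q + M.mulVec z₀) + z₀ ⬝ᵥ z₀ with hCdef
  have hC0 : 0 ≤ C :=
    add_nonneg (dot_nonneg' hz₀ (fun i => (hw₀ i).le))
      (Finset.sum_nonneg fun i _ => mul_self_nonneg _)
  set B : ℝ := C / β with hBdef
  have hB0 : 0 ≤ B := div_nonneg hC0 hβ.le
  have hbound : ∀ k i, zk k i ≤ B := by
    intro k i
    set z := zk k with hzdef
    -- scalar abbreviations
    have f1 : z ⬝ᵥ q + z ⬝ᵥ (N k).mulVec z = 0 := by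
      have := hzkc k
      rwa [dotProduct_add] at this
    have f2 : 0 ≤ z₀ ⬝ᵥ q + z₀ ⬝ᵥ (N k).mulVec z := by
      have := dot_nonneg' hz₀ (hzkw k)
      rwa [dotProduct_add] at this
    have f3 : 0 ≤ z ⬝ᵥ (N k).mulVec z - z ⬝ᵥ (N k).mulVec z₀
        - z₀ ⬝ᵥ (N k).mulVec z + z₀ ⬝ᵥ (N k).mulVec z₀ := by
      have h1 : 0 ≤ (z - z₀) ⬝ᵥ (N k).mulVec (z - z₀) := by
        rw [hNmul, dotProduct_add, dotProduct_smul]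
        have h2 := hM (z - z₀)
        have h3 : 0 ≤ (z - z₀) ⬝ᵥ (z - z₀) :=
          Finset.sum_nonneg fun i _ => mul_self_nonneg _
        have h4 : (z - z₀) ⬝ᵥ (M + ε k • 1).mulVec (z - z₀)
            = (z - z₀) ⬝ᵥ M.mulVec (z - z₀) + ε k • ((z - z₀) ⬝ᵥ (z - z₀)) := by
          rw [Matrix.add_mulVec, dotProduct_add]
          congr 1
          rw [Matrix.smul_mulVec, Matrix.one_mulVec, dotProduct_smul]
        simp only [smul_eq_mul] at *
        nlinarith [mul_nonneg (hε0 k).le h3]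
      rw [Matrix.mulVec_sub, dotProduct_sub, sub_dotProduct,
        sub_dotProduct] at h1
      linarith
    -- z ⬝ᵥ (q + N z₀) ≤ z₀ ⬝ᵥ (q + N z₀)
    have key : z ⬝ᵥ q + z ⬝ᵥ (N k).mulVec z₀ ≤ z₀ ⬝ᵥ q + z₀ ⬝ᵥ (N k).mulVec z₀ := by
      linarith
    -- component bound
    have hg₀ : ∀ j, β ≤ (q + (N k).mulVec z₀) j := by
      intro j
      rw [hNmul]
      have : (q + (M.mulVec z₀ + ε k • z₀)) j
          = (q + M.mulVec z₀) j + ε k * z₀ j := by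
        simp [add_assoc]
      rw [this]
      have := mul_nonneg (hε0 k).le (hz₀ j)
      linarith [hβle j]
    have hsum : z i * β ≤ z ⬝ᵥ (q + (N k).mulVec z₀) := by
      have h5 : z i * β ≤ z i * (q + (N k).mulVec z₀) i :=
        mul_le_mul_of_nonneg_left (hg₀ i) (hzk0 k i)
      refine h5.trans (Finset.single_le_sum (f := fun j => z j * (q + (N k).mulVec z₀) j)
        (fun j _ => mul_nonneg (hzk0 k j) (le_trans hβ.le (hg₀ j))) (Finset.mem_univ i))
    have hub : z ⬝ᵥ (q + (N k).mulVec z₀) ≤ C := by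
      rw [dotProduct_add] at hsum ⊢
      have h6 : z₀ ⬝ᵥ (N k).mulVec z₀ = z₀ ⬝ᵥ M.mulVec z₀ + ε k * (z₀ ⬝ᵥ z₀) := by
        rw [hNmul, dotProduct_add, dotProduct_smul, smul_eq_mul]
      have h7 : ε k * (z₀ ⬝ᵥ z₀) ≤ z₀ ⬝ᵥ z₀ := by
        have h8 : 0 ≤ z₀ ⬝ᵥ z₀ := Finset.sum_nonneg fun i _ => mul_self_nonneg _
        nlinarith [hε1 k, hε0 k]
      have h9 : z₀ ⬝ᵥ (q + M.mulVec z₀) = z₀ ⬝ᵥ q + z₀ ⬝ᵥ M.mulVec z₀ := by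
        rw [dotProduct_add]
      rw [hCdef, h9]
      linarith [key, h6]
    have := hsum.trans hub
    rw [hBdef, le_div_iff₀ hβ]
    linarith [this]
  -- compactness
  set xseq : ℕ → EuclideanSpace ℝ (Fin m) := fun k => WithLp.toLp 2 (zk k) with hxseq
  set R : ℝ := Real.sqrt (m * B^2 + 1) with hR
  have hmem : ∀ k, xseq k ∈ Metric.closedBall (0 : EuclideanSpace ℝ (Fin m)) R := by
    intro k
    rw [Metric.mem_closedBall, EuclideanSpace.dist_eq, hR]
    apply Real.sqrt_le_sqrt
    have h1 : ∀ i, dist (xseq k i) ((0 : EuclideanSpace ℝ (Fin m)) i)^2 ≤ B^2 := by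
      intro i
      rw [Real.dist_eq, sq_abs]
      have h2 : xseq k i = zk k i := rfl
      have h3 : (0 : EuclideanSpace ℝ (Fin m)) i = 0 := rfl
      rw [h2, h3, sub_zero]
      nlinarith [hzk0 k i, hbound k i]
    calc ∑ i, dist (xseq k i) ((0 : EuclideanSpace ℝ (Fin m)) i)^2
        ≤ ∑ _i : Fin m, B^2 := Finset.sum_le_sum fun i _ => h1 i
      _ = m * B^2 := by
          rw [Finset.sum_const, Finset.card_univ, Fintype.card_fin, nsmul_eq_mul]
      _ ≤ m * B^2 + 1 := by linarith
  obtain ⟨zbar, -, φ, hφ, hconv⟩ :=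
    tendsto_subseq_of_bounded Metric.isBounded_closedBall hmem
  have hcoord : ∀ i, Tendsto (fun k => zk (φ k) i) atTop (nhds (zbar i)) :=
    fun i => euclid_coord_tendsto hconv i
  have hφtop : Tendsto (fun k => ε (φ k)) atTop (nhds 0) :=
    hεlim.comp hφ.tendsto_atTop
  set Z : Fin m → ℝ := fun i => zbar i with hZ
  -- limit of w components
  have hwtend : ∀ i, Tendsto (fun k => (q + (N (φ k)).mulVec (zk (φ k))) i)
      atTop (nhds ((q + M.mulVec Z) i)) := by
    intro i
    have hrw : ∀ k, (q + (N (φ k)).mulVec (zk (φ k))) i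
        = q i + (∑ j, M i j * zk (φ k) j) + ε (φ k) * zk (φ k) i := by
      intro k
      rw [hNmul]
      simp [Matrix.mulVec, dotProduct, add_assoc]
    simp only [hrw]
    have hgoal : (q + M.mulVec Z) i = q i + (∑ j, M i j * Z j) + 0 * Z i := by
      simp [Matrix.mulVec, dotProduct]
    rw [hgoal]
    exact ((tendsto_const_nhds.add
      (tendsto_finset_sum _ fun j _ => (hcoord j).const_mul (M i j))).add
      (hφtop.mul (hcoord i)))
  refine ⟨Z, fun i => ge_of_tendsto (hcoord i) (Eventually.of_forall fun k => hzk0 _ i),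
    fun i => ge_of_tendsto (hwtend i) (Eventually.of_forall fun k => hzkw _ i), ?_⟩
  have hdot : Tendsto (fun k => zk (φ k) ⬝ᵥ (q + (N (φ k)).mulVec (zk (φ k))))
      atTop (nhds (Z ⬝ᵥ (q + M.mulVec Z))) := by
    apply tendsto_finset_sum
    intro i _
    exact (hcoord i).mul (hwtend i)
  have hzero : Tendsto (fun k => zk (φ k) ⬝ᵥ (q + (N (φ k)).mulVec (zk (φ k))))
      atTop (nhds 0) := by
    simp only [fun k => hzkc (φ k)]
    exact tendsto_const_nhds
  exact tendsto_nhds_unique hdot hzero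



lemma dot_pointwise {m : ℕ} {a b : Fin m → ℝ} (ha : ∀ i, 0 ≤ a i) (hb : ∀ i, 0 ≤ b i)
    (h : a ⬝ᵥ b = 0) : ∀ i, a i * b i = 0 := by
  intro i
  have := (Finset.sum_eq_zero_iff_of_nonneg
    (fun j (_ : j ∈ Finset.univ) => mul_nonneg (ha j) (hb j))).mp h
  exact this i (Finset.mem_univ i)

lemma lcp_exists_of_feasible {m : ℕ} (M : Matrix (Fin m) (Fin m) ℝ)
    (hM : ∀ z : Fin m → ℝ, 0 ≤ z ⬝ᵥ M.mulVec z) (q : Fin m → ℝ)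
    (z₀ : Fin m → ℝ) (hz₀ : ∀ i, 0 ≤ z₀ i) (hw₀ : ∀ i, 0 ≤ (q + M.mulVec z₀) i) :
    ∃ z : Fin m → ℝ, (∀ i, 0 ≤ z i) ∧ (∀ i, 0 ≤ (q + M.mulVec z) i) ∧
      z ⬝ᵥ (q + M.mulVec z) = 0 := by
  classical
  set δ : ℕ → ℝ := fun k => 1/(k+1) with hδdef
  have hδ0 : ∀ k, 0 < δ k := fun k => by positivity
  set qδ : ℕ → Fin m → ℝ := fun k i => q i + δ k with hqδ
  have hsolve : ∀ k, ∃ u : Fin m → ℝ, (∀ i, 0 ≤ u i) ∧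
      (∀ i, 0 ≤ (qδ k + M.mulVec u) i) ∧ u ⬝ᵥ (qδ k + M.mulVec u) = 0 := by
    intro k
    apply lcp_exists_of_strict M hM (qδ k) z₀ hz₀
    intro i
    have : (qδ k + M.mulVec z₀) i = (q + M.mulVec z₀) i + δ k := by
      simp [hqδ]; ring
    rw [this]
    linarith [hw₀ i, hδ0 k]
  choose u hu0 huw huc using hsolve
  have hcomp : ∀ k i, u k i * (qδ k + M.mulVec (u k)) i = 0 :=
    fun k => dot_pointwise (hu0 k) (huw k) (huc k)
  set pattern : ℕ → Finset (Fin m) := fun k => Finset.univ.filter (fun i => 0 < u k i)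
    with hpat
  obtain ⟨α, hαinf⟩ := Finite.exists_infinite_fiber pattern
  have hαkey : ∀ n : ℕ, ∃ k, n < k ∧ pattern k = α := by
    intro n
    have : (pattern ⁻¹' {α}).Infinite := Set.infinite_coe_iff.mp hαinf
    obtain ⟨k, hk1, hk2⟩ := this.exists_gt n
    exact ⟨k, hk2, hk1⟩
  -- the Farkas system
  set ι := (Fin m) ⊕ ((Fin m) ⊕ ((Fin m) ⊕ (Fin m))) with hι
  set A : ι → Fin m → ℝ := Sum.elim (fun j j' => if j' = j then (-1:ℝ) else 0)
    (Sum.elim (fun j j' => if j ∈ α then 0 else (if j' = j then 1 else 0))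
      (Sum.elim (fun i j' => if i ∈ α then M i j' else 0) (fun i j' => -M i j'))) with hA
  set b0 : ι → ℝ := Sum.elim (fun _ => 0)
    (Sum.elim (fun _ => 0)
      (Sum.elim (fun i => if i ∈ α then -q i else 0) (fun i => q i))) with hb0
  set b1 : ι → ℝ := Sum.elim (fun _ => 0)
    (Sum.elim (fun _ => 0)
      (Sum.elim (fun i => if i ∈ α then (-1:ℝ) else 0) (fun i => 1))) with hb1
  -- row sums for a given vector
  have hrow : ∀ (x : Fin m → ℝ) (i : ι), ∑ j, A i j * x j =
      Sum.elim (fun j => -x j)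
        (Sum.elim (fun j => if j ∈ α then 0 else x j)
          (Sum.elim (fun i => if i ∈ α then M.mulVec x i else 0)
            (fun i => -M.mulVec x i))) i := by
    intro x i
    rcases i with j | i
    · simp [hA, ite_mul]
    rcases i with j | i
    · rcases Decidable.em (j ∈ α) with h | h <;> simp [hA, h, ite_mul]
    rcases i with i | i
    · rcases Decidable.em (i ∈ α) with h | h <;>
        simp [hA, h, ite_mul, Matrix.mulVec, dotProduct]
    · simp [hA, Matrix.mulVec, dotProduct, Finset.sum_neg_distrib]
  by_cases hfeas0 : ∃ x : Fin m → ℝ, ∀ i : ι, ∑ j, A i j * x j ≤ b0 i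
  · obtain ⟨x, hx⟩ := hfeas0
    have hx1 : ∀ j, 0 ≤ x j := by
      intro j
      have := hx (Sum.inl j)
      rw [hrow] at this
      simp [hb0] at this
      linarith
    have hx2 : ∀ j, j ∉ α → x j = 0 := by
      intro j hj
      have := hx (Sum.inr (Sum.inl j))
      rw [hrow] at this
      simp [hb0, hj] at this
      linarith [hx1 j]
    have hx3 : ∀ i, i ∈ α → M.mulVec x i ≤ -q i := by
      intro i hi
      have := hx (Sum.inr (Sum.inr (Sum.inl i)))
      rw [hrow] at this
      simpa [hb0, hi] using this
    have hx4 : ∀ i, 0 ≤ (q + M.mulVec x) i := by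
      intro i
      have := hx (Sum.inr (Sum.inr (Sum.inr i)))
      rw [hrow] at this
      simp [hb0] at this
      simp only [Pi.add_apply]
      linarith
    refine ⟨x, hx1, hx4, ?_⟩
    apply Finset.sum_eq_zero
    intro i _
    rcases Decidable.em (i ∈ α) with hi | hi
    · have : (q + M.mulVec x) i = 0 := by
        have h1 := hx3 i hi
        have h2 := hx4 i
        simp only [Pi.add_apply] at h2 ⊢
        linarith
      rw [this, mul_zero]
    · rw [hx2 i hi, zero_mul]
  · obtain ⟨y, hy0, hyA, hyb⟩ := farkas_lemma A b0 hfeas0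
    exfalso
    set S0 := ∑ i, y i * b0 i with hS0
    set S1 := ∑ i, y i * b1 i with hS1
    -- pick k with pattern k = α and δ k small
    obtain ⟨n, hn⟩ := exists_nat_gt ((|S1| + 1) / (-S0))
    obtain ⟨k, hkn, hkα⟩ := hαkey n
    have hδsmall : δ k * (|S1| + 1) < -S0 := by
      have h1 : 0 < (|S1| + 1) := by positivity
      have h2 : 0 < -S0 := by linarith
      have h3 : (|S1| + 1) / (-S0) < k + 1 := by
        have : (n:ℝ) < k + 1 := by
          have := hkn
          push_cast
          exact_mod_cast lt_trans (Nat.cast_lt.mpr hkn) (by linarith)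
        linarith
      rw [hδdef]
      rw [div_mul_eq_mul_div, div_lt_iff₀ (by positivity : (0:ℝ) < (k:ℝ)+1)]
      rw [div_lt_iff₀ h2] at h3
      nlinarith
    -- u k satisfies the system at δ k
    have hsys : ∀ i : ι, ∑ j, A i j * u k j ≤ b0 i + δ k * b1 i := by
      intro i
      rw [hrow]
      rcases i with j | i
      · simp [hb0, hb1]
        linarith [hu0 k j]
      rcases i with j | i
      · rcases Decidable.em (j ∈ α) with h | h
        · simp [hb0, hb1, h]
        · simp only [Sum.elim_inr, Sum.elim_inl, hb0, hb1, if_neg h]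
          have : ¬ (0 < u k j) := by
            intro hlt
            exact h (hkα ▸ Finset.mem_filter.mpr ⟨Finset.mem_univ j, hlt⟩)
          simp
          linarith [not_lt.mp this]
      rcases i with i | i
      · rcases Decidable.em (i ∈ α) with h | h
        · simp only [Sum.elim_inr, Sum.elim_inl, hb0, hb1, if_pos h]
          have hui : 0 < u k i := by
            have := hkα ▸ h
            exact (Finset.mem_filter.mp this).2
          have hw0 : (qδ k + M.mulVec (u k)) i = 0 := by
            have hc := hcomp k i
            rcases mul_eq_zero.mp hc with h' | h'
            · exact absurd h' hui.ne'
            · exact h'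
          simp only [Pi.add_apply, hqδ] at hw0
          linarith
        · simp [hb0, hb1, h]
      · simp only [Sum.elim_inr, hb0, hb1]
        have := huw k i
        simp only [Pi.add_apply, hqδ] at this
        linarith
    -- contradiction
    have hzero : (0:ℝ) = ∑ j, (∑ i, y i * A i j) * u k j :=
      (Finset.sum_eq_zero fun j _ => by rw [hyA j, zero_mul]).symm
    have hswap : ∑ j, (∑ i, y i * A i j) * u k j = ∑ i, y i * (∑ j, A i j * u k j) := by
      simp_rw [Finset.sum_mul, Finset.mul_sum]
      rw [Finset.sum_comm]
      exact Finset.sum_congr rfl fun j _ => Finset.sum_congr rfl fun i _ => by ring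
    have hle : ∑ i, y i * (∑ j, A i j * u k j) ≤ ∑ i, y i * (b0 i + δ k * b1 i) :=
      Finset.sum_le_sum fun i _ => mul_le_mul_of_nonneg_left (hsys i) (hy0 i)
    have hexpand : ∑ i, y i * (b0 i + δ k * b1 i) = S0 + δ k * S1 := by
      rw [hS0, hS1, Finset.mul_sum, ← Finset.sum_add_distrib]
      exact Finset.sum_congr rfl fun i _ => by ring
    have hfinal : S0 + δ k * S1 < 0 := by
      have h1 : δ k * S1 ≤ δ k * |S1| :=
        mul_le_mul_of_nonneg_left (le_abs_self S1) (hδ0 k).le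
      have h2 : δ k * |S1| < δ k * (|S1| + 1) :=
        mul_lt_mul_of_pos_left (by linarith) (hδ0 k)
      linarith
    have hchain : (0:ℝ) ≤ S0 + δ k * S1 := by
      calc (0:ℝ) = ∑ j, (∑ i, y i * A i j) * u k j := hzero
        _ = ∑ i, y i * (∑ j, A i j * u k j) := hswap
        _ ≤ ∑ i, y i * (b0 i + δ k * b1 i) := hle
        _ = S0 + δ k * S1 := hexpand
    linarith



lemma psd_cross {m : ℕ} (M : Matrix (Fin m) (Fin m) ℝ)
    (hM : ∀ z : Fin m → ℝ, 0 ≤ z ⬝ᵥ M.mulVec z) {z : Fin m → ℝ}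
    (hz : z ⬝ᵥ M.mulVec z = 0) (x : Fin m → ℝ) :
    x ⬝ᵥ M.mulVec z + z ⬝ᵥ M.mulVec x = 0 := by
  set a := x ⬝ᵥ M.mulVec z + z ⬝ᵥ M.mulVec x with ha
  set c := x ⬝ᵥ M.mulVec x with hc
  have hc0 : 0 ≤ c := hM x
  have hq : ∀ t : ℝ, 0 ≤ t * a + t^2 * c := by
    intro t
    have h := hM (z + t • x)
    have hexp : (z + t • x) ⬝ᵥ M.mulVec (z + t • x)
        = z ⬝ᵥ M.mulVec z + t * a + t^2 * c := by
      rw [Matrix.mulVec_add, Matrix.mulVec_smul, add_dotProduct,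
        dotProduct_add, dotProduct_add, smul_dotProduct,
        dotProduct_smul, smul_dotProduct, dotProduct_smul]
      simp only [smul_eq_mul, ha, hc]
      ring
    rw [hexp, hz, zero_add] at h
    exact h
  have h1 := hq (-a/(c+1))
  have h2 : (0:ℝ) < c + 1 := by linarith
  have h3 : (-a/(c+1)) * a + (-a/(c+1))^2 * c = -a^2 / (c+1)^2 := by
    field_simp
    ring
  rw [h3] at h1
  have h4 : 0 ≤ -a^2 := by
    have h6 := mul_nonneg h1 (sq_nonneg (c+1))
    rwa [div_mul_cancel₀ _ (by positivity : ((c+1)^2:ℝ) ≠ 0)] at h6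
  have h5 : a^2 = 0 := le_antisymm (by linarith) (sq_nonneg a)
  exact pow_eq_zero_iff (by norm_num) |>.mp h5

lemma swap_dot {m : ℕ} (M : Matrix (Fin m) (Fin m) ℝ) (d e : Fin m → ℝ) :
    d ⬝ᵥ M.mulVec e = ∑ j, (∑ i, d i * M i j) * e j := by
  simp only [dotProduct, Matrix.mulVec, Finset.mul_sum, Finset.sum_mul]
  rw [Finset.sum_comm]
  exact Finset.sum_congr rfl fun j _ => Finset.sum_congr rfl fun i _ => by ring

theorem stmt17 {m : ℕ} (M : Matrix (Fin m) (Fin m) ℝ)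
    -- `M` positive semidefinite (not necessarily symmetric)
    (hM : ∀ z : Fin m → ℝ, 0 ≤ z ⬝ᵥ M.mulVec z) (q : Fin m → ℝ) :
    -- (i) ↔ (ii)
    ((∀ z : Fin m → ℝ,
        ((∀ i, 0 ≤ z i) ∧ (∀ i, 0 ≤ M.mulVec z i) ∧ z ⬝ᵥ M.mulVec z = 0) → 0 ≤ q ⬝ᵥ z)
      ↔ (∃ z : Fin m → ℝ, (∀ i, 0 ≤ z i) ∧ ∀ i, 0 ≤ (q + M.mulVec z) i)) ∧
    -- (ii) ↔ (iii)
    ((∃ z : Fin m → ℝ, (∀ i, 0 ≤ z i) ∧ ∀ i, 0 ≤ (q + M.mulVec z) i)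
      ↔ (∃ z : Fin m → ℝ, (∀ i, 0 ≤ z i) ∧ (∀ i, 0 ≤ (q + M.mulVec z) i) ∧
          z ⬝ᵥ (q + M.mulVec z) = 0)) := by
  classical
  constructor
  · constructor
    · -- (i) → (ii)
      intro hQ
      by_contra hne
      push_neg at hne
      -- Farkas system
      set A : (Fin m ⊕ Fin m) → Fin m → ℝ :=
        Sum.elim (fun j j' => if j' = j then (-1:ℝ) else 0) (fun i j' => -M i j') with hA
      set b : (Fin m ⊕ Fin m) → ℝ := Sum.elim (fun _ => 0) (fun i => q i) with hb
      have hrow : ∀ (x : Fin m → ℝ) (i : Fin m ⊕ Fin m), ∑ j, A i j * x j =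
          Sum.elim (fun j => -x j) (fun i => -M.mulVec x i) i := by
        intro x i
        rcases i with j | i
        · simp [hA, ite_mul]
        · simp [hA, Matrix.mulVec, dotProduct, Finset.sum_neg_distrib]
      have hinfeas : ¬ ∃ x : Fin m → ℝ, ∀ i, ∑ j, A i j * x j ≤ b i := by
        rintro ⟨x, hx⟩
        have hx1 : ∀ j, 0 ≤ x j := by
          intro j
          have := hx (Sum.inl j)
          rw [hrow] at this
          simp [hb] at this
          linarith
        have hx2 : ∀ i, 0 ≤ (q + M.mulVec x) i := by
          intro i
          have := hx (Sum.inr i)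
          rw [hrow] at this
          simp [hb] at this
          simp only [Pi.add_apply]
          linarith
        obtain ⟨i, hi⟩ := hne x hx1
        exact absurd (hx2 i) (not_le.mpr hi)
      obtain ⟨y, hy0, hyA, hyb⟩ := farkas_lemma A b hinfeas
      set d : Fin m → ℝ := fun i => y (Sum.inr i) with hd
      have hd0 : ∀ i, 0 ≤ d i := fun i => hy0 (Sum.inr i)
      have hMT : ∀ j, ∑ i, d i * M i j ≤ 0 := by
        intro j
        have hthis := hyA j
        rw [Fintype.sum_sum_type] at hthis
        have e1 : ∑ j', y (Sum.inl j') * A (Sum.inl j') j = - y (Sum.inl j) := by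
          simp [hA, mul_ite]
        have e2 : ∑ i, y (Sum.inr i) * A (Sum.inr i) j = - ∑ i, d i * M i j := by
          simp only [hA, Sum.elim_inr, mul_neg, hd]
          rw [← Finset.sum_neg_distrib]
        rw [e1, e2] at hthis
        have h3 := hy0 (Sum.inl j)
        linarith
      have hqd : ∑ i, d i * q i < 0 := by
        have := hyb
        rw [Fintype.sum_sum_type] at this
        simpa [hb] using this
      -- d ∈ Q_M
      have hdMd : d ⬝ᵥ M.mulVec d = 0 := by
        refine le_antisymm ?_ (hM d)
        rw [swap_dot]
        exact Finset.sum_nonpos fun j _ =>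
          mul_nonpos_of_nonpos_of_nonneg (hMT j) (hd0 j)
      have hMd : ∀ j, 0 ≤ M.mulVec d j := by
        intro j
        have hx := psd_cross M hM hdMd (fun j' => if j' = j then 1 else 0)
        have h1 : (fun j' => if j' = j then (1:ℝ) else 0) ⬝ᵥ M.mulVec d = M.mulVec d j := by
          simp [dotProduct, ite_mul]
        have h2 : d ⬝ᵥ M.mulVec (fun j' => if j' = j then (1:ℝ) else 0) = ∑ i, d i * M i j := by
          simp [dotProduct, Matrix.mulVec, mul_ite]
        rw [h1, h2] at hx
        linarith [hMT j]
      have := hQ d ⟨hd0, hMd, hdMd⟩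
      have hcomm : q ⬝ᵥ d = ∑ i, d i * q i := by
        simp [dotProduct]
        exact Finset.sum_congr rfl fun i _ => by ring
      rw [hcomm] at this
      linarith
    · -- (ii) → (i)
      rintro ⟨z₀, hz₀, hw₀⟩ z ⟨hz0, hMz, hzMz⟩
      have h1 : 0 ≤ z ⬝ᵥ (q + M.mulVec z₀) :=
        Finset.sum_nonneg fun i _ => mul_nonneg (hz0 i) (hw₀ i)
      rw [dotProduct_add] at h1
      have h2 := psd_cross M hM hzMz z₀
      have h3 : 0 ≤ z₀ ⬝ᵥ M.mulVec z :=
        Finset.sum_nonneg fun i _ => mul_nonneg (hz₀ i) (hMz i)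
      have h4 : q ⬝ᵥ z = z ⬝ᵥ q := dotProduct_comm q z
      rw [h4]
      linarith
  · constructor
    · rintro ⟨z₀, hz₀, hw₀⟩
      exact lcp_exists_of_feasible M hM q z₀ hz₀ hw₀
    · rintro ⟨z, h1, h2, h3⟩
      exact ⟨z, h1, h2⟩
end
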